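/- arXiv:1802.02456 — 7 statements merged into one kernel-verified Lean document; each statement's English description precedes it below -/
import Mathlib

section
/- Assume n ≥ 1, m ≥ 0, 2n > d and m ≤ 2n + d − 1. For all r, u ∈ O_E, the element P_r := 1 + εⁿπ^{2n}·r·τ(r) of O_E satisfies: (a) τ(P_r) = P_r; (b) P_r − (1 + εⁿπ^{2n}r²) ∈ p_E^{m+1}; (c) P_r² − 1 ∈ p_E^{m+1} (so that P_r⁻¹ − P_r ∈ p_E^{m+1}); and (d) P_r·P_u − P_{r+u} ∈ p_E^{m+1}. -/
/-!
Put `ϖ = π τ(π)`. Then `εⁿ π^{2n} = ϖⁿ` is fixed by `τ` and has valuation `2n`, and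
`P_r = 1 + ϖⁿ r τ(r)`. In characteristic 2 every difference in (b)–(d) is, up to a unit, a sum of
multiples of `ϖ^{2n}` and of `ϖⁿ (x + τ x)` with `x` integral. Writing `x = c₀ + c₁ π` with `c₀, c₁`
fixed by `τ`, the trace is `x + τ x = c₁ (π + τ π) = c₁ π (ε - 1)`; the valuations of `c₀` and
`c₁ π` have different parities, so `c₁` is integral and `v (x + τ x) ≥ d + 1`. Both `4n` and
`2n + d + 1` exceed `m`.
-/

open Matrix

noncomputable section

namespace ADLV

variable {E : Type*} [Field E]

/-- `e₋(a)`, the lower unipotent matrix. -/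
def em (a : E) : Matrix (Fin 2) (Fin 2) E := !![1, 0; a, 1]

/-- `e₊(a)`, the upper unipotent matrix. -/
def ep (a : E) : Matrix (Fin 2) (Fin 2) E := !![1, a; 0, 1]

/-- `e₀(c, c')`, the diagonal matrix. -/
def e0 (c c' : E) : Matrix (Fin 2) (Fin 2) E := !![c, 0; 0, c']

/-- The congruence subgroup `I_E^r`, as a set of matrices. -/
def IEr (v : E → WithTop ℤ) (r : ℤ) : Set (Matrix (Fin 2) (Fin 2) E) :=
  {g | (((r + 1) / 2 : ℤ) : WithTop ℤ) ≤ v (g 0 0 - 1) ∧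
    ((r / 2 : ℤ) : WithTop ℤ) ≤ v (g 0 1) ∧
    ((r / 2 + 1 : ℤ) : WithTop ℤ) ≤ v (g 1 0) ∧
    (((r + 1) / 2 : ℤ) : WithTop ℤ) ≤ v (g 1 1 - 1)}

/-- The Iwahori subgroup `I_E`, as a set of matrices. -/
def IwE (v : E → WithTop ℤ) : Set (Matrix (Fin 2) (Fin 2) E) :=
  {g | v (g 0 0) = 0 ∧ (0 : WithTop ℤ) ≤ v (g 0 1) ∧
    (1 : WithTop ℤ) ≤ v (g 1 0) ∧ v (g 1 1) = 0}

/-- `P_r = 1 + εⁿ π^{2n} r τ(r)`. -/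
def Pel (τ : E →+* E) (ε π : E) (n : ℤ) (r : E) : E := 1 + ε ^ n * π ^ (2 * n) * r * τ r

/-- `i(t, r) = e₊(r) e₋(εⁿ π^{2n} τ(r) P_r⁻¹) e₀(t, τ(t) P_r⁻¹)`. -/
def imat (τ : E →+* E) (ε π : E) (n : ℤ) (t r : E) : Matrix (Fin 2) (Fin 2) E :=
  ep r * em (ε ^ n * π ^ (2 * n) * τ r * (Pel τ ε π n r)⁻¹) * e0 t (τ t * (Pel τ ε π n r)⁻¹)

/-- The element `ẇ`. -/
def wdot (ε π : E) (n : ℤ) : Matrix (Fin 2) (Fin 2) E :=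
  !![0, π ^ (-n); π ^ n, 0] * e0 (ε ^ (n / 2)) (ε ^ (-((n + 1) / 2)))

/-- The element `v̇`. -/
def vdot (π : E) (n d : ℤ) : Matrix (Fin 2) (Fin 2) E :=
  !![0, π ^ (-((d + 1) / 2 + (n + 1) / 2)); π ^ ((d + 1) / 2 + n / 2), 0]

/-- `ι(c₀ + c₁ π)`, the embedding of `E` into `Mat₂(F)` on the element `c₀ + c₁ π`, `c₀, c₁ ∈ F`. -/
def iota (Δ ϖ : E) (c₀ c₁ : E) : Matrix (Fin 2) (Fin 2) E := !![c₀ + Δ * c₁, c₁; ϖ * c₁, c₀]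

theorem map_one_eq_zero_of_map_mul {v : E → WithTop ℤ} (hv_top : ∀ x : E, v x = ⊤ ↔ x = 0)
    (hv_mul : ∀ x y : E, v (x * y) = v x + v y) : v 1 = 0 := by
  have h := hv_mul 1 1
  rw [one_mul] at h
  lift v 1 to ℤ using (hv_top 1).not.2 one_ne_zero with a
  have ha : a = a + a := by exact_mod_cast h
  exact_mod_cast (by omega : a = 0)

theorem inv_sub_self_eq_inv_mul {x : E} (hx : x ≠ 0) : x⁻¹ - x = x⁻¹ * (1 - x ^ 2) := by
  field_simp

theorem div_zpow_mul_zpow_two_mul {x y : E} (hy : y ≠ 0) (n : ℤ) :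
    (x / y) ^ n * y ^ (2 * n) = (y * x) ^ n := by
  rw [_root_.zpow_mul, ← mul_zpow]
  congr 1
  field_simp

theorem self_add_apply_eq_mul_div_sub_one [CharP E 2] (τ : E →+* E) {π : E} (hπ : π ≠ 0) :
    π + τ π = π * (τ π / π - 1) := by
  rw [mul_sub, mul_div_cancel₀ _ hπ]
  linear_combination π * (CharTwo.two_eq_zero (R := E))

section Valuation

variable {w : AddValuation E (WithTop ℤ)} {τ : E →+* E}

theorem map_zpow_of_map_eq_coe {x : E} {j : ℤ} (hx : w x = j) {n : ℤ} (hn : 0 ≤ n) :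
    w (x ^ n) = ((n * j : ℤ) : WithTop ℤ) := by
  lift n to ℕ using hn
  rw [zpow_natCast, w.map_pow, hx, ← WithTop.coe_nsmul, nsmul_eq_mul]

theorem le_map_mul_mul_apply (hw_tau : ∀ x : E, w (τ x) = w x) {a x : E} {A : WithTop ℤ}
    (hA : A ≤ w a) (hx : 0 ≤ w x) : A ≤ w (a * x * τ x) := by
  rw [w.map_mul, w.map_mul, hw_tau, ← add_zero A, ← add_zero (A + 0)]
  exact add_le_add (add_le_add hA hx) hx

theorem nonneg_map_of_nonneg_map_add_mul {π c₀ c₁ : E} (hπ : w π = 1)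
    (h₀ : ∀ k : ℤ, w c₀ = k → Even k) (h₁ : ∀ k : ℤ, w c₁ = k → Even k)
    (hx : 0 ≤ w (c₀ + c₁ * π)) : 0 ≤ w c₁ := by
  rcases eq_or_ne c₁ 0 with rfl | hc₁
  · simp
  lift w c₁ to ℤ using w.ne_top_iff.2 hc₁ with k hk
  have hk_even := h₁ k rfl
  have hc₁π : w (c₁ * π) = ((k + 1 : ℤ) : WithTop ℤ) := by
    rw [w.map_mul, ← hk, hπ]
    rfl
  have hne : w c₀ ≠ w (c₁ * π) := fun h =>
    Int.even_add_one.1 (h₀ (k + 1) (h.trans hc₁π)) hk_even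
  have hk₁ : (0 : WithTop ℤ) ≤ ((k + 1 : ℤ) : WithTop ℤ) := by
    rw [← hc₁π]
    exact hx.trans (w.map_add_of_distinct_val hne ▸ min_le_right _ _)
  have hk₁' : 0 ≤ k + 1 := by exact_mod_cast hk₁
  obtain ⟨j, rfl⟩ := hk_even
  exact_mod_cast (by omega : 0 ≤ j + j)

theorem le_map_add_apply_of_nonneg [CharP E 2] {π : E} (hπ : w π = 1)
    (hw_even : ∀ x : E, τ x = x → ∀ k : ℤ, w x = k → Even k)
    (hbasis : ∀ y : E, ∃ c₀ c₁ : E, τ c₀ = c₀ ∧ τ c₁ = c₁ ∧ y = c₀ + c₁ * π)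
    {x : E} (hx : 0 ≤ w x) : w (π + τ π) ≤ w (x + τ x) := by
  obtain ⟨c₀, c₁, h₀, h₁, rfl⟩ := hbasis x
  have htrace : c₀ + c₁ * π + τ (c₀ + c₁ * π) = c₁ * (π + τ π) := by
    rw [map_add, map_mul, h₀, h₁]
    linear_combination c₀ * (CharTwo.two_eq_zero (R := E))
  rw [htrace, w.map_mul]
  exact le_add_of_nonneg_left
    (nonneg_map_of_nonneg_map_add_mul hπ (hw_even c₀ h₀) (hw_even c₁ h₁) hx)

end Valuation

section Pel

variable {τ : E →+* E} {ε π : E} {n : ℤ}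

theorem Pel_conj (hττ : ∀ x : E, τ (τ x) = x)
    (ha : τ (ε ^ n * π ^ (2 * n)) = ε ^ n * π ^ (2 * n)) (r : E) :
    τ (Pel τ ε π n r) = Pel τ ε π n r := by
  rw [Pel, map_add, map_one, map_mul, map_mul, ha, hττ]
  ring

theorem Pel_sub_eq [CharP E 2] (r : E) :
    Pel τ ε π n r - (1 + ε ^ n * π ^ (2 * n) * r ^ 2) =
      ε ^ n * π ^ (2 * n) * (r * (r + τ r)) := by
  rw [Pel]
  linear_combination -(ε ^ n * π ^ (2 * n) * r ^ 2) * (CharTwo.two_eq_zero (R := E))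

theorem Pel_sq_sub_one [CharP E 2] (r : E) :
    Pel τ ε π n r ^ 2 - 1 = (ε ^ n * π ^ (2 * n) * r * τ r) ^ 2 := by
  rw [Pel]
  linear_combination ε ^ n * π ^ (2 * n) * r * τ r * (CharTwo.two_eq_zero (R := E))

theorem Pel_mul_Pel_sub [CharP E 2] (hττ : ∀ x : E, τ (τ x) = x) (r u : E) :
    Pel τ ε π n r * Pel τ ε π n u - Pel τ ε π n (r + u) =
      ε ^ n * π ^ (2 * n) * r * τ r * (ε ^ n * π ^ (2 * n) * u * τ u) +
        ε ^ n * π ^ (2 * n) * (r * τ u + τ (r * τ u)) := by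
  simp only [Pel, map_add, map_mul, hττ]
  linear_combination -(ε ^ n * π ^ (2 * n)) * (r * τ u + τ r * u) * (CharTwo.two_eq_zero (R := E))

variable {w : AddValuation E (WithTop ℤ)} {A T : WithTop ℤ} {r u : E}

theorem le_map_Pel_sub [CharP E 2] (hA : A ≤ w (ε ^ n * π ^ (2 * n))) (hr : 0 ≤ w r)
    (hT : T ≤ w (r + τ r)) :
    A + T ≤ w (Pel τ ε π n r - (1 + ε ^ n * π ^ (2 * n) * r ^ 2)) := by
  rw [Pel_sub_eq, w.map_mul, w.map_mul r]
  exact add_le_add hA (hT.trans (le_add_of_nonneg_left hr))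

theorem le_map_Pel_sq_sub_one [CharP E 2] (hN : A ≤ w (ε ^ n * π ^ (2 * n) * r * τ r)) :
    A + A ≤ w (Pel τ ε π n r ^ 2 - 1) := by
  rw [Pel_sq_sub_one, sq, w.map_mul]
  gcongr

theorem map_Pel_eq_zero (hN : 0 < w (ε ^ n * π ^ (2 * n) * r * τ r)) :
    w (Pel τ ε π n r) = 0 := by
  rw [Pel, w.map_add_eq_of_lt_left (w.map_one ▸ hN), w.map_one]

theorem map_Pel_inv_sub (hN : 0 < w (ε ^ n * π ^ (2 * n) * r * τ r)) :
    w ((Pel τ ε π n r)⁻¹ - Pel τ ε π n r) = w (Pel τ ε π n r ^ 2 - 1) := by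
  have hP := map_Pel_eq_zero hN
  rw [inv_sub_self_eq_inv_mul (w.ne_top_iff.1 (hP ▸ WithTop.zero_ne_top)), w.map_mul,
    w.map_inv, hP, neg_zero, zero_add, w.map_sub_swap]

theorem le_map_Pel_mul_Pel_sub [CharP E 2] (hττ : ∀ x : E, τ (τ x) = x)
    (hA : A ≤ w (ε ^ n * π ^ (2 * n))) (hNr : A ≤ w (ε ^ n * π ^ (2 * n) * r * τ r))
    (hNu : A ≤ w (ε ^ n * π ^ (2 * n) * u * τ u)) (hT : T ≤ w (r * τ u + τ (r * τ u))) :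
    min (A + A) (A + T) ≤ w (Pel τ ε π n r * Pel τ ε π n u - Pel τ ε π n (r + u)) := by
  rw [Pel_mul_Pel_sub hττ]
  refine le_trans ?_ (w.map_add _ _)
  rw [w.map_mul, w.map_mul _ (_ + _)]
  gcongr

end Pel

theorem statement1_general [CharP E 2]
    (τ : E →+* E) (hττ : ∀ x : E, τ (τ x) = x)
    (v : E → WithTop ℤ)
    (hv_top : ∀ x : E, v x = ⊤ ↔ x = 0)
    (hv_mul : ∀ x y : E, v (x * y) = v x + v y)
    (hv_add : ∀ x y : E, min (v x) (v y) ≤ v (x + y))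
    (hv_tau : ∀ x : E, v (τ x) = v x)
    (π : E) (hπ : v π = 1)
    (hv_even : ∀ x : E, τ x = x → ∀ k : ℤ, v x = (k : WithTop ℤ) → Even k)
    (hbasis : ∀ y : E, ∃ c₀ c₁ : E, τ c₀ = c₀ ∧ τ c₁ = c₁ ∧ y = c₀ + c₁ * π)
    (d : ℤ)
    (ε : E) (hε : ε = τ π / π)
    (hεd : v (ε - 1) = (d : WithTop ℤ))
    (n m : ℤ) (hn : 1 ≤ n) (h2n : d < 2 * n) (hmb : m ≤ 2 * n + d - 1)
    (r u : E) (hr : (0 : WithTop ℤ) ≤ v r) (hu : (0 : WithTop ℤ) ≤ v u) :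
    τ (Pel τ ε π n r) = Pel τ ε π n r ∧
    ((m + 1 : ℤ) : WithTop ℤ) ≤ v (Pel τ ε π n r - (1 + ε ^ n * π ^ (2 * n) * r ^ 2)) ∧
    ((m + 1 : ℤ) : WithTop ℤ) ≤ v (Pel τ ε π n r ^ 2 - 1) ∧
    ((m + 1 : ℤ) : WithTop ℤ) ≤ v ((Pel τ ε π n r)⁻¹ - Pel τ ε π n r) ∧
    ((m + 1 : ℤ) : WithTop ℤ) ≤ v (Pel τ ε π n r * Pel τ ε π n u - Pel τ ε π n (r + u)) := by
  let w : AddValuation E (WithTop ℤ) :=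
    .of v ((hv_top 0).2 rfl) (map_one_eq_zero_of_map_mul hv_top hv_mul) hv_add hv_mul
  have hw_tau (x : E) : w (τ x) = w x := hv_tau x
  have hwπ : w π = 1 := hπ
  have hπ0 : π ≠ 0 := w.ne_top_iff.1 (hwπ ▸ WithTop.one_ne_top)
  have ha : ε ^ n * π ^ (2 * n) = (π * τ π) ^ n := hε ▸ div_zpow_mul_zpow_two_mul hπ0 n
  have hA : w (ε ^ n * π ^ (2 * n)) = ((2 * n : ℤ) : WithTop ℤ) := by
    rw [ha, map_zpow_of_map_eq_coe (j := 2) (by rw [w.map_mul, hw_tau, hwπ]; rfl)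
      (by omega), mul_comm]
  have hT (x : E) (hx : 0 ≤ w x) : ((d + 1 : ℤ) : WithTop ℤ) ≤ w (x + τ x) := by
    refine (le_map_add_apply_of_nonneg hπ hv_even hbasis hx).trans' (le_of_eq ?_)
    rw [self_add_apply_eq_mul_div_sub_one τ hπ0, ← hε, w.map_mul, hwπ,
      show w (ε - 1) = d from hεd]
    push_cast
    exact add_comm _ _
  have hN (x : E) (hx : 0 ≤ w x) := le_map_mul_mul_apply hw_tau hA.ge hx
  have hm₁ : ((m + 1 : ℤ) : WithTop ℤ) ≤ ↑(2 * n) + ↑(d + 1) := by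
    exact_mod_cast (by omega : m + 1 ≤ 2 * n + (d + 1))
  have hm₂ : ((m + 1 : ℤ) : WithTop ℤ) ≤ ↑(2 * n) + ↑(2 * n) := by
    exact_mod_cast (by omega : m + 1 ≤ 2 * n + 2 * n)
  have hNr_pos : 0 < w (ε ^ n * π ^ (2 * n) * r * τ r) :=
    (hN r hr).trans_lt' (by exact_mod_cast (by omega : (0 : ℤ) < 2 * n))
  have hrτu : 0 ≤ w (r * τ u) := by
    rw [w.map_mul, hw_tau]
    exact add_nonneg hr hu
  have hc := hm₂.trans (le_map_Pel_sq_sub_one (hN r hr))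
  exact ⟨Pel_conj hττ (by rw [ha, map_zpow₀, map_mul, hττ, mul_comm]) r,
    hm₁.trans (le_map_Pel_sub hA.ge hr (hT r hr)), hc,
    hc.trans_eq (map_Pel_inv_sub hNr_pos).symm,
    (le_min hm₂ hm₁).trans (le_map_Pel_mul_Pel_sub hττ hA.ge (hN r hr) (hN u hu) (hT _ hrτu))⟩

theorem statement1 [CharP E 2]
    (τ : E →+* E) (hττ : ∀ x : E, τ (τ x) = x) (hτne : τ ≠ RingHom.id E)
    (v : E → WithTop ℤ)
    (hv_top : ∀ x : E, v x = ⊤ ↔ x = 0)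
    (hv_mul : ∀ x y : E, v (x * y) = v x + v y)
    (hv_add : ∀ x y : E, min (v x) (v y) ≤ v (x + y))
    (hv_tau : ∀ x : E, v (τ x) = v x)
    (π : E) (hπ : v π = 1)
    (hv_even : ∀ x : E, τ x = x → ∀ k : ℤ, v x = (k : WithTop ℤ) → Even k)
    (hbasis : ∀ y : E, ∃ c₀ c₁ : E, τ c₀ = c₀ ∧ τ c₁ = c₁ ∧ y = c₀ + c₁ * π)
    (d : ℤ) (hd : 0 < d) (hdodd : Odd d)
    (ε : E) (hε : ε = τ π / π)
    (hεd : v (ε - 1) = (d : WithTop ℤ))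
    (n m : ℤ) (hn : 1 ≤ n) (hm : 0 ≤ m) (h2n : d < 2 * n) (hmb : m ≤ 2 * n + d - 1)
    (r u : E) (hr : (0 : WithTop ℤ) ≤ v r) (hu : (0 : WithTop ℤ) ≤ v u) :
    τ (Pel τ ε π n r) = Pel τ ε π n r ∧
    ((m + 1 : ℤ) : WithTop ℤ) ≤ v (Pel τ ε π n r - (1 + ε ^ n * π ^ (2 * n) * r ^ 2)) ∧
    ((m + 1 : ℤ) : WithTop ℤ) ≤ v (Pel τ ε π n r ^ 2 - 1) ∧
    ((m + 1 : ℤ) : WithTop ℤ) ≤ v ((Pel τ ε π n r)⁻¹ - Pel τ ε π n r) ∧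
    ((m + 1 : ℤ) : WithTop ℤ) ≤ v (Pel τ ε π n r * Pel τ ε π n u - Pel τ ε π n (r + u)) :=
  statement1_general τ hττ v hv_top hv_mul hv_add hv_tau π hπ hv_even hbasis d ε hε hεd n m hn h2n
    hmb r u hr hu

end ADLV
end
end

section
/- Assume n ≥ 1, m ≥ 0, 2n > d and m ≤ 2n + d − 1. For every r ∈ O_E there exist j, j′ ∈ I_E^{2m+1} such that i(1,r) = P_r·[[1, r],[εⁿπ^{2n}r, 1]]·j and i(1,r)⁻¹ = [[1, r],[εⁿπ^{2n}r, 1]]·j′, where [[1, r],[εⁿπ^{2n}r, 1]] denotes the 2×2 matrix with rows (1, r) and (εⁿπ^{2n}r, 1). -/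
/-!
In characteristic two, with `b = εⁿπ^{2n}τ(r)` and `P = P_r = 1 + r b`, one has
`i(1, r) = P⁻¹ • [[1, r], [b, 1]]`, and `[[1, r], [b, 1]]` squares to `P`, so it is `i(1, r)⁻¹`.
Dividing it on the left by `[[1, r], [a, 1]]`, `a = εⁿπ^{2n}r`, leaves the lower triangular
matrix `[[P/Q, 0], [(b - a)/Q, 1]]` with `Q = 1 + r a`, and `i(1, r)` leaves this matrix times
`P⁻²`. Both are congruent to the identity modulo `p_E^{m+1}`:
`b - a = εⁿπ^{2n}(τ(r) - r)` and `v(τ(r) - r) ≥ v(τ(π) - π) = d + 1` (write `r = c₀ + c₁π`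
over `F`; since valuations on `F` are even, `c₁` is integral), while `P² = 1 + (r b)²`
lies in `U_E^{4n}` although `P` itself is only known to lie in `U_E^{2n}`.
-/

open Matrix

noncomputable section

namespace ADLV

variable {E : Type*} [Field E]

lemma val_one_of_val_mul {f : E → WithTop ℤ} (h1 : f 1 ≠ ⊤)
    (hmul : ∀ x y, f (x * y) = f x + f y) : f 1 = 0 := by
  obtain ⟨a, ha⟩ := WithTop.ne_top_iff_exists.1 h1
  have h := hmul 1 1
  rw [mul_one, ← ha] at h
  rw [← ha]
  norm_cast at h ⊢
  omega

section CharTwo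

variable [CharP E 2]

lemma ep_mul_em_mul_e0_one {r b P : E} (hP : P = 1 + r * b) (hP0 : P ≠ 0) :
    ep r * em (b * P⁻¹) * e0 1 P⁻¹ = P⁻¹ • !![1, r; b, 1] := by
  have h2 : (2 : E) = 0 := CharTwo.two_eq_zero
  ext i j
  fin_cases i <;> fin_cases j <;>
    simp [ep, em, e0, Matrix.mul_apply, Fin.sum_univ_two, mul_comm]
  field_simp
  linear_combination hP + r * b * h2

lemma oneDiag_mul_self (r b : E) :
    !![1, r; b, 1] * !![1, r; b, 1] = (1 + r * b) • (1 : Matrix (Fin 2) (Fin 2) E) := by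
  ext i j
  fin_cases i <;> fin_cases j <;>
    simp [Matrix.mul_apply, Fin.sum_univ_two, CharTwo.add_self_eq_zero]
  ring

lemma inv_smul_oneDiag {r b : E} (h : 1 + r * b ≠ 0) :
    ((1 + r * b)⁻¹ • !![1, r; b, 1])⁻¹ = !![1, r; b, 1] := by
  refine Matrix.inv_eq_right_inv ?_
  rw [Matrix.smul_mul, oneDiag_mul_self, smul_smul, inv_mul_cancel₀ h, one_smul]

lemma oneDiag_eq_mul {r a b : E} (ha : 1 + r * a ≠ 0) :
    !![1, r; b, 1] =
      !![1, r; a, 1] * !![(1 + r * b) / (1 + r * a), 0; (b - a) / (1 + r * a), 1] := by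
  have h2 : (2 : E) = 0 := CharTwo.two_eq_zero
  ext i j
  fin_cases i <;> fin_cases j <;> simp [Matrix.mul_apply, Fin.sum_univ_two]
  · field_simp
    linear_combination (r * a - r * b) * h2
  · rw [mul_div_assoc', ← add_div, eq_div_iff ha]
    ring

end CharTwo

section Valuation

variable (w : AddValuation E (WithTop ℤ))

lemma le_val_div_sub_one {x y : E} {K : WithTop ℤ} (hy : w y = 0) (h : K ≤ w (x - y)) :
    K ≤ w (x / y - 1) := by
  have hy0 : y ≠ 0 := by
    rintro rfl
    simp at hy
  rwa [div_sub_one hy0, w.map_div, hy, sub_zero]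

lemma val_eq_zero_of_pos_val_sub_one {x : E} (h : 0 < w (x - 1)) : w x = 0 := by
  rw [w.map_eq_of_lt_sub (by rwa [w.map_one]), w.map_one]

lemma ne_zero_of_pos_val_sub_one {x : E} (h : 0 < w (x - 1)) : x ≠ 0 := by
  rintro rfl
  simp [w.map_one] at h

lemma le_val_inv_sub_one {x : E} {K : WithTop ℤ} (hK : 0 < K) (h : K ≤ w (x - 1)) :
    K ≤ w (x⁻¹ - 1) := by
  rw [← one_div]
  exact le_val_div_sub_one w (val_eq_zero_of_pos_val_sub_one w (hK.trans_le h))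
    (by rwa [w.map_sub_swap])

lemma le_val_mul_sub_one {x y : E} {K : WithTop ℤ} (hK : 0 ≤ K) (hx : K ≤ w (x - 1))
    (hy : K ≤ w (y - 1)) : K ≤ w (x * y - 1) := by
  have hx0 : 0 ≤ w x := by
    simpa [w.map_one] using w.map_add (x - 1) 1 |>.trans' (le_min (hK.trans hx) w.map_one.ge)
  rw [show x * y - 1 = x * (y - 1) + (x - 1) by ring]
  refine w.map_le_add ?_ hx
  rw [w.map_mul]
  exact hy.trans (le_add_of_nonneg_left hx0)

lemma lowerTriangular_mem_IEr {m : ℤ} {x y z : E} (hx : ((m + 1 : ℤ) : WithTop ℤ) ≤ w (x - 1))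
    (hy : ((m + 1 : ℤ) : WithTop ℤ) ≤ w y) (hz : ((m + 1 : ℤ) : WithTop ℤ) ≤ w (z - 1)) :
    !![x, 0; y, z] ∈ IEr w (2 * m + 1) := by
  have e1 : (2 * m + 1 + 1) / 2 = m + 1 := by omega
  have e2 : (2 * m + 1) / 2 = m := by omega
  push_cast at hx hy hz
  simp [IEr, e1, e2, hx, hy, hz]

lemma le_val_mul_mul {r s x : E} (hr : 0 ≤ w r) (hx : 0 ≤ w x) : w s ≤ w (r * (s * x)) := by
  rw [w.map_mul, w.map_mul]
  exact (le_add_of_nonneg_right hx).trans (le_add_of_nonneg_left hr)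

lemma map_zpow_of_nonneg (x : E) {k : ℤ} (hk : 0 ≤ k) : w (x ^ k) = k.toNat • w x := by
  obtain ⟨k, rfl⟩ := Int.eq_ofNat_of_zero_le hk
  simp [w.map_pow]

lemma val_zpow_mul_zpow_two_mul {ε π : E} (hε : w ε = 0) (hπ : w π = 1) {n : ℤ} (hn : 0 ≤ n) :
    w (ε ^ n * π ^ (2 * n)) = ((2 * n : ℤ) : WithTop ℤ) := by
  rw [w.map_mul, map_zpow_of_nonneg w _ hn, map_zpow_of_nonneg w _ (by omega), hε, hπ, nsmul_zero,
    zero_add, nsmul_one, ← WithTop.coe_natCast, Int.toNat_of_nonneg (by omega)]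

/-- Elements of the fixed field have even valuation, so `w c₀ ≠ w (c₁ * π)`: the valuation of
`c₀ + c₁ * π` is the minimum of the two. -/
lemma nonneg_val_of_nonneg_val_add_mul {τ : E →+* E} {π : E} (hπ : w π = 1)
    (hv_even : ∀ x : E, τ x = x → ∀ k : ℤ, w x = k → Even k) {c₀ c₁ : E}
    (h₀ : τ c₀ = c₀) (h₁ : τ c₁ = c₁) (h : 0 ≤ w (c₀ + c₁ * π)) : 0 ≤ w c₁ := by
  by_contra! hneg
  obtain ⟨k, hk⟩ := WithTop.ne_top_iff_exists.1 (hneg.trans_le le_top).ne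
  have hk_even : Even k := hv_even c₁ h₁ k hk.symm
  have hk_neg : k + 1 < 0 := by
    have : k < 0 := by exact_mod_cast hk ▸ hneg
    obtain ⟨l, rfl⟩ := hk_even
    omega
  have hc₁π : w (c₁ * π) = ((k + 1 : ℤ) : WithTop ℤ) := by
    rw [w.map_mul, ← hk, hπ]
    norm_cast
  have hne : w c₀ ≠ w (c₁ * π) := fun heq =>
    Int.not_even_iff_odd.2 hk_even.add_one (hv_even c₀ h₀ (k + 1) (heq.trans hc₁π))
  rw [w.map_add_of_distinct_val hne, hc₁π] at h
  exact absurd ((le_min_iff.1 h).2) (by exact_mod_cast hk_neg.not_ge)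

lemma val_sub_le_val_conj_sub {τ : E →+* E} {π : E} (hπ : w π = 1)
    (hv_even : ∀ x : E, τ x = x → ∀ k : ℤ, w x = k → Even k)
    (hbasis : ∀ y : E, ∃ c₀ c₁ : E, τ c₀ = c₀ ∧ τ c₁ = c₁ ∧ y = c₀ + c₁ * π)
    {r : E} (hr : 0 ≤ w r) : w (τ π - π) ≤ w (τ r - r) := by
  obtain ⟨c₀, c₁, h₀, h₁, rfl⟩ := hbasis r
  have hconj : τ (c₀ + c₁ * π) - (c₀ + c₁ * π) = c₁ * (τ π - π) := by
    rw [map_add, map_mul, h₀, h₁]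
    ring
  rw [hconj, w.map_mul]
  exact le_add_of_nonneg_left (nonneg_val_of_nonneg_val_add_mul w hπ hv_even h₀ h₁ hr)

lemma exists_mem_IEr_oneDiag_eq [CharP E 2] {m : ℤ} (hm : 0 ≤ m) {r a b : E} (hr : 0 ≤ w r)
    (ha : 0 < w (r * a)) (hb : ((m + 1 : ℤ) : WithTop ℤ) ≤ w (r * b) + w (r * b))
    (hab : ((m + 1 : ℤ) : WithTop ℤ) ≤ w (b - a)) :
    ∃ j j' : Matrix (Fin 2) (Fin 2) E, j ∈ IEr w (2 * m + 1) ∧ j' ∈ IEr w (2 * m + 1) ∧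
      (1 + r * b)⁻¹ • !![1, r; b, 1] = (1 + r * b) • !![1, r; a, 1] * j ∧
      !![1, r; b, 1] = !![1, r; a, 1] * j' := by
  set K : WithTop ℤ := ((m + 1 : ℤ) : WithTop ℤ)
  set P := 1 + r * b
  set Q := 1 + r * a
  have hK : 0 < K := WithTop.coe_pos.2 (by omega)
  have hQ : w Q = 0 := val_eq_zero_of_pos_val_sub_one w (by simpa [Q] using ha)
  have hQ0 : Q ≠ 0 := ne_zero_of_pos_val_sub_one w (by simpa [Q] using ha)
  have hPQ : K ≤ w (P / Q - 1) := by
    refine le_val_div_sub_one w hQ ?_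
    rw [show P - Q = r * (b - a) by ring, w.map_mul]
    exact hab.trans (le_add_of_nonneg_left hr)
  have hba : K ≤ w ((b - a) / Q) := by
    rwa [w.map_div, hQ, sub_zero]
  have hP2 : K ≤ w ((P ^ 2)⁻¹ - 1) := by
    refine le_val_inv_sub_one w hK ?_
    have h2 : (2 : E) = 0 := CharTwo.two_eq_zero
    rw [show P ^ 2 - 1 = (r * b) ^ 2 by linear_combination (r * b) * h2, w.map_pow, two_nsmul]
    exact hb
  have hvP2 : w (P ^ 2)⁻¹ = 0 := val_eq_zero_of_pos_val_sub_one w (hK.trans_le hP2)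
  have hP0 : P ≠ 0 := by
    rintro hP0
    simp [hP0] at hvP2
  refine ⟨(P ^ 2)⁻¹ • !![P / Q, 0; (b - a) / Q, 1], !![P / Q, 0; (b - a) / Q, 1], ?_,
    lowerTriangular_mem_IEr w hPQ hba (by simp), ?_, oneDiag_eq_mul hQ0⟩
  · simp only [Matrix.smul_of, Matrix.smul_cons, Matrix.smul_empty, smul_eq_mul, mul_zero, mul_one]
    refine lowerTriangular_mem_IEr w (le_val_mul_sub_one w hK.le hP2 hPQ) ?_ hP2
    rwa [w.map_mul, hvP2, zero_add]
  · rw [Matrix.mul_smul, Matrix.smul_mul, smul_smul, ← oneDiag_eq_mul hQ0]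
    congr 1
    field_simp

end Valuation

lemma imat_one_eq_smul [CharP E 2] (τ : E →+* E) (ε π : E) (n : ℤ) (r : E)
    (hP : Pel τ ε π n r ≠ 0) :
    imat τ ε π n 1 r = (Pel τ ε π n r)⁻¹ • !![1, r; ε ^ n * π ^ (2 * n) * τ r, 1] := by
  rw [imat, map_one, one_mul]
  exact ep_mul_em_mul_e0_one (by rw [Pel]; ring) hP

theorem statement2_general [CharP E 2]
    (τ : E →+* E)
    (v : E → WithTop ℤ)
    (hv_top : ∀ x : E, v x = ⊤ ↔ x = 0)
    (hv_mul : ∀ x y : E, v (x * y) = v x + v y)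
    (hv_add : ∀ x y : E, min (v x) (v y) ≤ v (x + y))
    (hv_tau : ∀ x : E, v (τ x) = v x)
    (π : E) (hπ : v π = 1)
    (hv_even : ∀ x : E, τ x = x → ∀ k : ℤ, v x = (k : WithTop ℤ) → Even k)
    (hbasis : ∀ y : E, ∃ c₀ c₁ : E, τ c₀ = c₀ ∧ τ c₁ = c₁ ∧ y = c₀ + c₁ * π)
    (d : ℤ)
    (ε : E) (hε : ε = τ π / π)
    (hεd : v (ε - 1) = (d : WithTop ℤ))
    (n m : ℤ) (hn : 1 ≤ n) (hm : 0 ≤ m) (h2n : d < 2 * n) (hmb : m ≤ 2 * n + d - 1)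
    (r : E) (hr : (0 : WithTop ℤ) ≤ v r) :
    ∃ j j' : Matrix (Fin 2) (Fin 2) E, j ∈ IEr v (2 * m + 1) ∧ j' ∈ IEr v (2 * m + 1) ∧
      imat τ ε π n 1 r = Pel τ ε π n r • !![(1 : E), r; ε ^ n * π ^ (2 * n) * r, 1] * j ∧
      (imat τ ε π n 1 r)⁻¹ = !![(1 : E), r; ε ^ n * π ^ (2 * n) * r, 1] * j' := by
  let w : AddValuation E (WithTop ℤ) := .of v ((hv_top 0).2 rfl)
    (val_one_of_val_mul (by simp [hv_top]) hv_mul) hv_add hv_mul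
  set s := ε ^ n * π ^ (2 * n)
  have hvs : w s = ((2 * n : ℤ) : WithTop ℤ) :=
    val_zpow_mul_zpow_two_mul w (by simp [w, hε, hv_tau, hπ]) hπ (by omega)
  have hτr : 0 ≤ w (τ r) := by simpa [w, hv_tau] using hr
  have hconj : ((1 + d : ℤ) : WithTop ℤ) ≤ w (τ r - r) := by
    have hπ0 : π ≠ 0 := w.ne_top_iff.1 (by simp [w, hπ])
    have hτπ : τ π - π = π * (ε - 1) := by rw [hε]; field_simp
    calc ((1 + d : ℤ) : WithTop ℤ) = w (τ π - π) := by simp [w, hτπ, hπ, hεd]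
      _ ≤ w (τ r - r) := val_sub_le_val_conj_sub w hπ hv_even hbasis hr
  have hsa : ((2 * n : ℤ) : WithTop ℤ) ≤ w (r * (s * r)) := hvs ▸ le_val_mul_mul w hr hr
  have hsb : ((2 * n : ℤ) : WithTop ℤ) ≤ w (r * (s * τ r)) := hvs ▸ le_val_mul_mul w hr hτr
  have h2n_pos : (0 : WithTop ℤ) < ((2 * n : ℤ) : WithTop ℤ) := WithTop.coe_pos.2 (by omega)
  have hsb2 : ((m + 1 : ℤ) : WithTop ℤ) ≤ w (r * (s * τ r)) + w (r * (s * τ r)) :=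
    (WithTop.coe_le_coe.2 (by omega : m + 1 ≤ 2 * n + 2 * n)).trans (add_le_add hsb hsb)
  have hsab : ((m + 1 : ℤ) : WithTop ℤ) ≤ w (s * τ r - s * r) := by
    rw [← mul_sub, w.map_mul, hvs]
    exact (WithTop.coe_le_coe.2 (by omega : m + 1 ≤ 2 * n + (1 + d))).trans
      (add_le_add le_rfl hconj)
  obtain ⟨j, j', hj, hj', h, h'⟩ :=
    exists_mem_IEr_oneDiag_eq w hm hr (h2n_pos.trans_le hsa) hsb2 hsab
  have hP0 : 1 + r * (s * τ r) ≠ 0 :=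
    ne_zero_of_pos_val_sub_one w (by simpa using h2n_pos.trans_le hsb)
  have hPel : Pel τ ε π n r = 1 + r * (s * τ r) := by rw [Pel]; ring
  refine ⟨j, j', hj, hj', ?_, ?_⟩
  · rw [imat_one_eq_smul τ ε π n r (hPel ▸ hP0), hPel, h]
  · rw [imat_one_eq_smul τ ε π n r (hPel ▸ hP0), hPel, inv_smul_oneDiag hP0, h']

theorem statement2 [CharP E 2]
    (τ : E →+* E) (hττ : ∀ x : E, τ (τ x) = x) (hτne : τ ≠ RingHom.id E)
    (v : E → WithTop ℤ)
    (hv_top : ∀ x : E, v x = ⊤ ↔ x = 0)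
    (hv_mul : ∀ x y : E, v (x * y) = v x + v y)
    (hv_add : ∀ x y : E, min (v x) (v y) ≤ v (x + y))
    (hv_tau : ∀ x : E, v (τ x) = v x)
    (π : E) (hπ : v π = 1)
    (hv_even : ∀ x : E, τ x = x → ∀ k : ℤ, v x = (k : WithTop ℤ) → Even k)
    (hbasis : ∀ y : E, ∃ c₀ c₁ : E, τ c₀ = c₀ ∧ τ c₁ = c₁ ∧ y = c₀ + c₁ * π)
    (d : ℤ) (hd : 0 < d) (hdodd : Odd d)
    (ε : E) (hε : ε = τ π / π)
    (hεd : v (ε - 1) = (d : WithTop ℤ))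
    (n m : ℤ) (hn : 1 ≤ n) (hm : 0 ≤ m) (h2n : d < 2 * n) (hmb : m ≤ 2 * n + d - 1)
    (r : E) (hr : (0 : WithTop ℤ) ≤ v r) :
    ∃ j j' : Matrix (Fin 2) (Fin 2) E, j ∈ IEr v (2 * m + 1) ∧ j' ∈ IEr v (2 * m + 1) ∧
      imat τ ε π n 1 r = Pel τ ε π n r • !![(1 : E), r; ε ^ n * π ^ (2 * n) * r, 1] * j ∧
      (imat τ ε π n 1 r)⁻¹ = !![(1 : E), r; ε ^ n * π ^ (2 * n) * r, 1] * j' :=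
  statement2_general τ v hv_top hv_mul hv_add hv_tau π hπ hv_even hbasis d ε hε hεd n m hn hm h2n
    hmb r hr

end ADLV
end
end

section
/- Assume n ≥ 1, m ≥ 0, 2n > d and m ≤ 2n + d − 1. For all r, u ∈ O_E the commutator i(1,r)·i(1,u)·i(1,r)⁻¹·i(1,u)⁻¹ lies in I_E^{2m+1}; in other words, the elements i(1,r) and i(1,u) commute modulo I_E^{2m+1}. -/
/-!
In characteristic 2 the matrix `M_r = [[1, r], [a τ(r), 1]]`, `a = εⁿ π^{2n}`, has trace zero,
so `M_r⁻¹ = det(M_r)⁻¹ M_r`, and `i(1, r) = M_r⁻¹`. The commutator is therefore `(det N)⁻¹ N²`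
with `N = M_r M_u`, and Cayley–Hamilton (`N² = tr N • N + det N` in characteristic 2) turns it
into `1 + c N` with `c = tr N / det N`. Here `det N = P_r P_u` is a unit and
`tr N = a (x + τ x)` with `x = r τ(u)` integral. Writing `x = c₀ + c₁ π` over `F`, parity of
valuations forces `c₁` to be integral, so `x + τ x = c₁ (π + τ π)` has valuation at least
`v (π + τ π) = d + 1`. Hence `v c ≥ 2n + d + 1 > m` and `1 + c N ∈ I_E^{2m+1}`.
-/

open Matrix

noncomputable section

namespace Matrix

variable {R : Type*}

theorem mul_self_eq_trace_smul_add_det_smul [CommRing R] [CharP R 2]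
    (N : Matrix (Fin 2) (Fin 2) R) : N * N = N.trace • N + N.det • 1 := by
  rw [← CharTwo.sub_eq_add]
  ext i j
  fin_cases i <;> fin_cases j <;> simp [mul_apply, trace_fin_two, det_fin_two] <;> ring

theorem inv_eq_det_inv_smul_self_of_trace_eq_zero [Field R] [CharP R 2]
    {M : Matrix (Fin 2) (Fin 2) R} (hM : M.trace = 0) : M⁻¹ = M.det⁻¹ • M := by
  have hdiag : M 1 1 = M 0 0 := (CharTwo.add_eq_zero.mp (by rwa [trace_fin_two] at hM)).symm
  rw [inv_def, Ring.inverse_eq_inv', adjugate_fin_two]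
  congr 1
  ext i j
  fin_cases i <;> fin_cases j <;> simp [hdiag, CharTwo.neg_eq]

theorem inv_mul_inv_mul_mul_eq_one_add_smul [Field R] [CharP R 2]
    {A B : Matrix (Fin 2) (Fin 2) R} (hA : A.trace = 0) (hB : B.trace = 0)
    (hAB : (A * B).det ≠ 0) :
    A⁻¹ * B⁻¹ * A * B = 1 + ((A * B).det⁻¹ * (A * B).trace) • (A * B) := by
  calc A⁻¹ * B⁻¹ * A * B = (A * B).det⁻¹ • (A * B * (A * B)) := by
        rw [inv_eq_det_inv_smul_self_of_trace_eq_zero hA,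
          inv_eq_det_inv_smul_self_of_trace_eq_zero hB, det_mul, mul_inv]
        simp only [Matrix.smul_mul, Matrix.mul_smul, smul_smul, Matrix.mul_assoc, mul_comm]
    _ = 1 + ((A * B).det⁻¹ * (A * B).trace) • (A * B) := by
        rw [mul_self_eq_trace_smul_add_det_smul, smul_add, smul_smul, smul_smul,
          inv_mul_cancel₀ hAB, one_smul, add_comm]

end Matrix

namespace AddValuation

theorem map_matrix_mul_apply_nonneg {R n : Type*} [CommRing R] [Fintype n]
    (v : AddValuation R (WithTop ℤ)) {A B : Matrix n n R}
    (hA : ∀ i j, 0 ≤ v (A i j)) (hB : ∀ i j, 0 ≤ v (B i j)) (i j : n) :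
    0 ≤ v ((A * B) i j) :=
  v.map_le_sum fun k _ => (v.map_mul _ _).symm ▸ add_nonneg (hA i k) (hB k j)

variable {K : Type*} [Field K] (v : AddValuation K (WithTop ℤ))

theorem map_nonneg_of_map_add_mul_nonneg {c₀ c₁ π : K} (hπ : v π = 1)
    (h₀ : ∀ k : ℤ, v c₀ = k → Even k) (h₁ : ∀ k : ℤ, v c₁ = k → Even k)
    (h : 0 ≤ v (c₀ + c₁ * π)) : 0 ≤ v c₁ := by
  rcases eq_or_ne c₁ 0 with rfl | hc₁
  · simp
  obtain ⟨k, hk⟩ := WithTop.ne_top_iff_exists.mp (v.ne_top_iff.mpr hc₁)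
  have hkπ : v (c₁ * π) = (k + 1 : ℤ) := by rw [v.map_mul, ← hk, hπ]; rfl
  -- `v c₀` is even (or `⊤`) while `v (c₁ * π)` is odd, so `v (c₀ + c₁ * π)` is their minimum.
  have hne : v c₀ ≠ v (c₁ * π) := fun h' =>
    Int.not_even_iff_odd.mpr (h₁ k hk.symm).add_one (h₀ _ (h'.trans hkπ))
  have hπ_nonneg : 0 ≤ v (c₁ * π) :=
    h.trans ((v.map_add_of_distinct_val hne).le.trans (min_le_right _ _))
  have hk₁ : (0 : ℤ) ≤ k + 1 := by rw [hkπ] at hπ_nonneg; exact_mod_cast hπ_nonneg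
  obtain ⟨j, rfl⟩ := h₁ k hk.symm
  rw [← hk]
  exact_mod_cast (by omega : (0 : ℤ) ≤ j + j)

theorem map_add_apply_le_map_add_apply_of_nonneg [CharP K 2] (τ : K →+* K) {π : K}
    (hπ : v π = 1) (hv_even : ∀ x : K, τ x = x → ∀ k : ℤ, v x = k → Even k)
    (hbasis : ∀ y : K, ∃ c₀ c₁ : K, τ c₀ = c₀ ∧ τ c₁ = c₁ ∧ y = c₀ + c₁ * π)
    {x : K} (hx : 0 ≤ v x) : v (π + τ π) ≤ v (x + τ x) := by
  obtain ⟨c₀, c₁, hc₀, hc₁, rfl⟩ := hbasis x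
  have htrace : c₀ + c₁ * π + τ (c₀ + c₁ * π) = c₁ * (π + τ π) := by
    rw [_root_.map_add, _root_.map_mul, hc₀, hc₁]
    linear_combination c₀ * (CharTwo.two_eq_zero : (2 : K) = 0)
  rw [htrace, v.map_mul]
  exact le_add_of_nonneg_left
    (v.map_nonneg_of_map_add_mul_nonneg hπ (hv_even c₀ hc₀) (hv_even c₁ hc₁) hx)

end AddValuation

namespace ADLV

variable {E : Type*} [Field E]

def imatOneInv (τ : E →+* E) (ε π : E) (n : ℤ) (r : E) : Matrix (Fin 2) (Fin 2) E :=
  !![1, r; ε ^ n * π ^ (2 * n) * τ r, 1]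

section CharTwo

variable [CharP E 2] (τ : E →+* E) (ε π : E) (n : ℤ)

theorem trace_imatOneInv (r : E) : (imatOneInv τ ε π n r).trace = 0 := by
  simp [imatOneInv, trace_fin_two, CharTwo.add_self_eq_zero]

theorem det_imatOneInv (r : E) : (imatOneInv τ ε π n r).det = Pel τ ε π n r := by
  simp only [imatOneInv, det_fin_two, of_apply, cons_val', cons_val_zero, cons_val_fin_one,
    cons_val_one, mul_one, CharTwo.sub_eq_add, Pel]
  ring

theorem imat_one_eq_inv {r : E} (hr : Pel τ ε π n r ≠ 0) :
    imat τ ε π n 1 r = (imatOneInv τ ε π n r)⁻¹ := by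
  rw [inv_eq_det_inv_smul_self_of_trace_eq_zero (trace_imatOneInv τ ε π n r),
    det_imatOneInv]
  ext i j
  have hP : Pel τ ε π n r = 1 + ε ^ n * π ^ (2 * n) * r * τ r := rfl
  fin_cases i <;> fin_cases j <;> simp [imat, imatOneInv, ep, em, e0, Matrix.mul_apply] <;>
    field_simp
  linear_combination hP + ε ^ n * π ^ (2 * n) * r * τ r * (CharTwo.two_eq_zero : (2 : E) = 0)

theorem trace_imatOneInv_mul (hττ : ∀ x : E, τ (τ x) = x) (r u : E) :
    (imatOneInv τ ε π n r * imatOneInv τ ε π n u).trace =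
      ε ^ n * π ^ (2 * n) * (r * τ u + τ (r * τ u)) := by
  simp [imatOneInv, trace_fin_two, hττ]
  linear_combination (CharTwo.two_eq_zero : (2 : E) = 0)

theorem imat_one_commutator {r u : E} (hr : Pel τ ε π n r ≠ 0) (hu : Pel τ ε π n u ≠ 0) :
    imat τ ε π n 1 r * imat τ ε π n 1 u * (imat τ ε π n 1 r)⁻¹ * (imat τ ε π n 1 u)⁻¹ =
      1 + ((Pel τ ε π n r * Pel τ ε π n u)⁻¹ *
        (imatOneInv τ ε π n r * imatOneInv τ ε π n u).trace) •
        (imatOneInv τ ε π n r * imatOneInv τ ε π n u) := by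
  have hdet := det_imatOneInv τ ε π n
  rw [imat_one_eq_inv τ ε π n hr, imat_one_eq_inv τ ε π n hu,
    nonsing_inv_nonsing_inv _ (by rw [hdet]; exact hr.isUnit),
    nonsing_inv_nonsing_inv _ (by rw [hdet]; exact hu.isUnit),
    inv_mul_inv_mul_mul_eq_one_add_smul (trace_imatOneInv τ ε π n r)
      (trace_imatOneInv τ ε π n u) (by rw [det_mul, hdet, hdet]; exact mul_ne_zero hr hu),
    det_mul, hdet, hdet]

end CharTwo

section Valuation

variable (v : AddValuation E (WithTop ℤ)) (τ : E →+* E) (ε π : E) (n : ℤ)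

theorem one_add_smul_mem_IEr {m : ℤ} {c : E} {N : Matrix (Fin 2) (Fin 2) E}
    (hc : ((m + 1 : ℤ) : WithTop ℤ) ≤ v c) (hN : ∀ i j, 0 ≤ v (N i j)) :
    1 + c • N ∈ IEr v (2 * m + 1) := by
  have hcN : ∀ i j, ((m + 1 : ℤ) : WithTop ℤ) ≤ v (c * N i j) := fun i j =>
    (v.map_mul c _).symm ▸ le_add_of_le_of_nonneg hc (hN i j)
  have hm : ((m : ℤ) : WithTop ℤ) ≤ ((m + 1 : ℤ) : WithTop ℤ) := by
    exact_mod_cast m.le_add_one le_rfl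
  rw [IEr, Set.mem_ofPred_eq, show (2 * m + 1 + 1) / 2 = m + 1 by omega,
    show (2 * m + 1) / 2 = m by omega]
  refine ⟨?_, hm.trans ?_, ?_, ?_⟩
  · simpa [one_apply] using hcN 0 0
  · simpa [one_apply] using hcN 0 1
  · simpa [one_apply] using hcN 1 0
  · simpa [one_apply] using hcN 1 1

theorem map_imatOneInv_apply_nonneg (hv_tau : ∀ x : E, v (τ x) = v x)
    (ha : 0 ≤ v (ε ^ n * π ^ (2 * n))) {r : E} (hr : 0 ≤ v r) (i j : Fin 2) :
    0 ≤ v (imatOneInv τ ε π n r i j) := by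
  fin_cases i <;> fin_cases j
  · simp [imatOneInv]
  · simpa [imatOneInv] using hr
  · show 0 ≤ v (ε ^ n * π ^ (2 * n) * τ r)
    rw [v.map_mul, hv_tau]
    exact add_nonneg ha hr
  · simp [imatOneInv]

theorem map_Pel_eq_zero_s3 (hv_tau : ∀ x : E, v (τ x) = v x)
    (ha : 0 < v (ε ^ n * π ^ (2 * n))) {r : E} (hr : 0 ≤ v r) : v (Pel τ ε π n r) = 0 := by
  have h : v 1 < v (ε ^ n * π ^ (2 * n) * r * τ r) := by
    rw [v.map_one, v.map_mul, v.map_mul, hv_tau]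
    exact add_pos_of_pos_of_nonneg (add_pos_of_pos_of_nonneg ha hr) hr
  exact (v.map_add_eq_of_lt_left h).trans v.map_one

theorem map_eps_zpow_mul_uniformizer_zpow (hv_tau : ∀ x : E, v (τ x) = v x) (hπ : v π = 1)
    (hε : ε = τ π / π) (hn : 0 ≤ n) : v (ε ^ n * π ^ (2 * n)) = (2 * n : ℤ) := by
  have hε₀ : v ε = 0 := by rw [hε, v.map_div, hv_tau, hπ]; rfl
  lift n to ℕ using hn
  rw [← Nat.cast_ofNat, ← Nat.cast_mul, zpow_natCast, zpow_natCast, v.map_mul, v.map_pow,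
    v.map_pow, hε₀, hπ, nsmul_zero, zero_add, ← WithTop.coe_one, ← WithTop.coe_nsmul, nsmul_one]

theorem map_uniformizer_add_apply [CharP E 2] (hπ : v π = 1) (hε : ε = τ π / π) {d : ℤ}
    (hεd : v (ε - 1) = d) : v (π + τ π) = (d + 1 : ℤ) := by
  have hπ₀ : π ≠ 0 := v.ne_top_iff.mp (by simp [hπ])
  rw [show π + τ π = (ε - 1) * π by
      rw [hε, sub_mul, div_mul_cancel₀ _ hπ₀, one_mul, CharTwo.sub_eq_add, add_comm],
    v.map_mul, hεd, hπ]
  rfl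

end Valuation

theorem statement3_general [CharP E 2]
    (τ : E →+* E) (hττ : ∀ x : E, τ (τ x) = x)
    (v : E → WithTop ℤ)
    (hv_top : ∀ x : E, v x = ⊤ ↔ x = 0)
    (hv_mul : ∀ x y : E, v (x * y) = v x + v y)
    (hv_add : ∀ x y : E, min (v x) (v y) ≤ v (x + y))
    (hv_tau : ∀ x : E, v (τ x) = v x)
    (π : E) (hπ : v π = 1)
    (hv_even : ∀ x : E, τ x = x → ∀ k : ℤ, v x = (k : WithTop ℤ) → Even k)
    (hbasis : ∀ y : E, ∃ c₀ c₁ : E, τ c₀ = c₀ ∧ τ c₁ = c₁ ∧ y = c₀ + c₁ * π)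
    (d : ℤ)
    (ε : E) (hε : ε = τ π / π)
    (hεd : v (ε - 1) = (d : WithTop ℤ))
    (n m : ℤ) (hn : 1 ≤ n) (hmb : m ≤ 2 * n + d - 1)
    (r u : E) (hr : (0 : WithTop ℤ) ≤ v r) (hu : (0 : WithTop ℤ) ≤ v u) :
    imat τ ε π n 1 r * imat τ ε π n 1 u * (imat τ ε π n 1 r)⁻¹ * (imat τ ε π n 1 u)⁻¹ ∈
      IEr v (2 * m + 1) := by
  have hv₁ : v 1 = 0 := ((WithTop.add_left_inj ((hv_top 1).not.mpr one_ne_zero)).mp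
    (by rw [add_zero, ← hv_mul, mul_one])).symm
  let w : AddValuation E (WithTop ℤ) := .of v ((hv_top 0).mpr rfl) hv₁ hv_add hv_mul
  have ha : w (ε ^ n * π ^ (2 * n)) = (2 * n : ℤ) :=
    map_eps_zpow_mul_uniformizer_zpow w τ ε π n hv_tau hπ hε (by omega)
  have hP : ∀ {x}, 0 ≤ w x → w (Pel τ ε π n x) = 0 :=
    map_Pel_eq_zero_s3 w τ ε π n hv_tau (ha ▸ by exact_mod_cast (by omega : 0 < 2 * n))
  have hPne : ∀ {x}, 0 ≤ w x → Pel τ ε π n x ≠ 0 := fun hx => w.ne_top_iff.mp (by simp [hP hx])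
  have htrace : ((d + 1 : ℤ) : WithTop ℤ) ≤ w (r * τ u + τ (r * τ u)) :=
    (map_uniformizer_add_apply w τ ε π hπ hε hεd).ge.trans
      (w.map_add_apply_le_map_add_apply_of_nonneg τ hπ hv_even hbasis
        ((w.map_mul _ _).symm ▸ add_nonneg hr (hu.trans_eq (hv_tau u).symm)))
  have hA : ∀ {x}, 0 ≤ w x → ∀ i j, 0 ≤ w (imatOneInv τ ε π n x i j) :=
    map_imatOneInv_apply_nonneg w τ ε π n hv_tau (ha ▸ by exact_mod_cast (by omega : 0 ≤ 2 * n))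
  rw [imat_one_commutator τ ε π n (hPne hr) (hPne hu), trace_imatOneInv_mul τ ε π n hττ]
  refine one_add_smul_mem_IEr w ?_ (w.map_matrix_mul_apply_nonneg (hA hr) (hA hu))
  rw [w.map_mul, w.map_inv, w.map_mul, hP hr, hP hu, w.map_mul, ha, add_zero, neg_zero,
    zero_add]
  calc ((m + 1 : ℤ) : WithTop ℤ) ≤ ((2 * n : ℤ) : WithTop ℤ) + ((d + 1 : ℤ) : WithTop ℤ) := by
        exact_mod_cast (by omega : m + 1 ≤ 2 * n + (d + 1))
    _ ≤ _ := add_le_add_right htrace _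

theorem statement3 [CharP E 2]
    (τ : E →+* E) (hττ : ∀ x : E, τ (τ x) = x) (hτne : τ ≠ RingHom.id E)
    (v : E → WithTop ℤ)
    (hv_top : ∀ x : E, v x = ⊤ ↔ x = 0)
    (hv_mul : ∀ x y : E, v (x * y) = v x + v y)
    (hv_add : ∀ x y : E, min (v x) (v y) ≤ v (x + y))
    (hv_tau : ∀ x : E, v (τ x) = v x)
    (π : E) (hπ : v π = 1)
    (hv_even : ∀ x : E, τ x = x → ∀ k : ℤ, v x = (k : WithTop ℤ) → Even k)
    (hbasis : ∀ y : E, ∃ c₀ c₁ : E, τ c₀ = c₀ ∧ τ c₁ = c₁ ∧ y = c₀ + c₁ * π)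
    (d : ℤ) (hd : 0 < d) (hdodd : Odd d)
    (ε : E) (hε : ε = τ π / π)
    (hεd : v (ε - 1) = (d : WithTop ℤ))
    (n m : ℤ) (hn : 1 ≤ n) (hm : 0 ≤ m) (h2n : d < 2 * n) (hmb : m ≤ 2 * n + d - 1)
    (r u : E) (hr : (0 : WithTop ℤ) ≤ v r) (hu : (0 : WithTop ℤ) ≤ v u) :
    imat τ ε π n 1 r * imat τ ε π n 1 u * (imat τ ε π n 1 r)⁻¹ * (imat τ ε π n 1 u)⁻¹ ∈
      IEr v (2 * m + 1) :=
  statement3_general τ hττ v hv_top hv_mul hv_add hv_tau π hπ hv_even hbasis d ε hε hεd n m hn hmb r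
    u hr hu

end ADLV
end
end

section
/- Assume n ≥ 1, m ≥ 0, 2n > d and m ≤ 2n + d − 1. For all t ∈ E^× and r ∈ O_E there exists j ∈ I_E^{2m+1} such that i(t,0)·i(1,r)·i(t,0)⁻¹·i(1,r)⁻¹ = e₊((1 + t·τ(t)⁻¹)·r)·j. (Here i(t,0) = e₀(t, τ(t)).) -/
/-! Since `i(t, 0) = e₀(t, τ t)` and `i(1, r) = e₊(r) e₋(c) e₀(1, P_r⁻¹)` with
`c = εⁿ π^{2n} τ(r) P_r⁻¹`, a direct computation writes the commutator as
`e₊((t/τ(t) - 1) r) · e₊(r) e₋((τ(t)/t - 1) c) e₊(-r)`, and `t/τ(t) - 1 = 1 + t/τ(t)` in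
characteristic 2. The last factor lies in `I_E^{2m+1}` because `v(c) ≥ 2n` (as `v(P_r) = 0`) and
`v(τ(t)/t - 1) ≥ d`: writing `t = c₀ + c₁ π` with `c₀, c₁ ∈ F`, one has `τ(t) - t = c₁ π (ε - 1)`,
while `v(t) ≤ v(c₁ π)` since `v(c₀)` is even and `v(c₁ π)` is odd. -/

open Matrix

noncomputable section

namespace ADLV

variable {E : Type*} [Field E]

lemma ep_inv (a : E) : (ep a)⁻¹ = ep (-a) :=
  Matrix.inv_eq_right_inv (by ext i j; fin_cases i <;> fin_cases j <;> simp [ep])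

lemma em_inv (a : E) : (em a)⁻¹ = em (-a) :=
  Matrix.inv_eq_right_inv (by ext i j; fin_cases i <;> fin_cases j <;> simp [em])

lemma e0_inv {c c' : E} (hc : c ≠ 0) (hc' : c' ≠ 0) : (e0 c c')⁻¹ = e0 c⁻¹ c'⁻¹ :=
  Matrix.inv_eq_right_inv (by ext i j; fin_cases i <;> fin_cases j <;> simp [e0, hc, hc'])

lemma imat_zero (τ : E →+* E) (ε π : E) (n : ℤ) (t : E) : imat τ ε π n t 0 = e0 t (τ t) := by
  ext i j; fin_cases i <;> fin_cases j <;> simp [imat, Pel, ep, em, e0]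

lemma imat_one (τ : E →+* E) (ε π : E) (n : ℤ) (r : E) :
    imat τ ε π n 1 r =
      ep r * em (ε ^ n * π ^ (2 * n) * τ r * (Pel τ ε π n r)⁻¹) * e0 1 (Pel τ ε π n r)⁻¹ := by
  simp only [imat, map_one, one_mul]

lemma e0_commutator {t t' c' : E} (r c : E) (ht : t ≠ 0) (ht' : t' ≠ 0) (hc' : c' ≠ 0) :
    e0 t t' * (ep r * em c * e0 1 c') * (e0 t t')⁻¹ * (ep r * em c * e0 1 c')⁻¹ =
      ep ((t / t' - 1) * r) * (ep r * em ((t' / t - 1) * c) * ep (-r)) := by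
  simp only [Matrix.mul_inv_rev, ep_inv, em_inv, e0_inv ht ht', e0_inv one_ne_zero hc', inv_one]
  ext i j
  fin_cases i <;> fin_cases j <;> simp [ep, em, e0, Matrix.mul_apply, Fin.sum_univ_two] <;>
    field_simp <;> ring

lemma ep_mul_em_mul_ep_neg (r b : E) :
    ep r * em b * ep (-r) = !![1 + r * b, -(r * b * r); b, 1 - b * r] := by
  ext i j; fin_cases i <;> fin_cases j <;> simp [ep, em, Matrix.mul_apply] <;> ring

lemma ep_mul_em_mul_ep_neg_mem_IEr (w : AddValuation E (WithTop ℤ)) {r b : E} {m : ℤ}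
    (hr : 0 ≤ w r) (hb : ((m + 1 : ℤ) : WithTop ℤ) ≤ w b) :
    ep r * em b * ep (-r) ∈ IEr w (2 * m + 1) := by
  have hrb : ((m + 1 : ℤ) : WithTop ℤ) ≤ w (r * b) := by
    rw [AddValuation.map_mul]; exact le_add_of_nonneg_of_le hr hb
  have hbr : ((m + 1 : ℤ) : WithTop ℤ) ≤ w (b * r) := by
    rw [AddValuation.map_mul]; exact le_add_of_le_of_nonneg hb hr
  have hrbr : ((m : ℤ) : WithTop ℤ) ≤ w (r * b * r) := by
    rw [AddValuation.map_mul]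
    exact le_add_of_le_of_nonneg (le_trans (by exact_mod_cast (Int.le_add_one le_rfl)) hrb) hr
  have hhalf : (2 * m + 1) / 2 = m := by omega
  have hhalf' : (2 * m + 1 + 1) / 2 = m + 1 := by omega
  rw [ep_mul_em_mul_ep_neg]
  simp only [IEr, Set.mem_ofPred_eq, hhalf, hhalf', Matrix.of_apply, Matrix.cons_val',
    Matrix.cons_val_zero, Matrix.cons_val_one, Matrix.empty_val', Matrix.cons_val_fin_one,
    add_sub_cancel_left, sub_sub_cancel_left, AddValuation.map_neg]
  exact ⟨hrb, hrbr, hb, hbr⟩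

def addValuationOf (v : E → WithTop ℤ) (hv_top : ∀ x : E, v x = ⊤ ↔ x = 0)
    (hv_mul : ∀ x y : E, v (x * y) = v x + v y)
    (hv_add : ∀ x y : E, min (v x) (v y) ≤ v (x + y)) : AddValuation E (WithTop ℤ) :=
  AddValuation.of v ((hv_top 0).2 rfl)
    (WithTop.add_left_cancel (x := v 1) (by simp [hv_top]) (by simpa using (hv_mul 1 1).symm))
    hv_add hv_mul

section Valuation

open LinearOrderedAddCommGroupWithTop

variable (w : AddValuation E (WithTop ℤ))

lemma val_div_nonneg {s t : E} (ht : t ≠ 0) (h : w t ≤ w s) : 0 ≤ w (s / t) := by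
  have hwt : w t ≠ ⊤ := w.ne_top_iff.2 ht
  rw [AddValuation.map_div, ← sub_self_eq_zero_of_ne_top hwt]
  exact (sub_le_sub_iff_left_of_ne_top hwt).2 h

lemma val_div_eq_zero {s t : E} (ht : t ≠ 0) (h : w s = w t) : w (s / t) = 0 := by
  rw [AddValuation.map_div, h, sub_self_eq_zero_of_ne_top (w.ne_top_iff.2 ht)]

variable (τ : E →+* E) {π : E}

lemma le_val_div_self_sub_one (hπ : w π = 1)
    (hv_even : ∀ x : E, τ x = x → ∀ k : ℤ, w x = (k : WithTop ℤ) → Even k)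
    (hbasis : ∀ y : E, ∃ c₀ c₁ : E, τ c₀ = c₀ ∧ τ c₁ = c₁ ∧ y = c₀ + c₁ * π)
    {d : ℤ} (hd : w (τ π / π - 1) = d) {t : E} (ht : t ≠ 0) :
    (d : WithTop ℤ) ≤ w (τ t / t - 1) := by
  obtain ⟨c₀, c₁, hc₀, hc₁, rfl⟩ := hbasis t
  have hπ0 : π ≠ 0 := by rintro rfl; simp at hπ
  have hsub : τ (c₀ + c₁ * π) / (c₀ + c₁ * π) - 1 =
      c₁ * π / (c₀ + c₁ * π) * (τ π / π - 1) := by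
    rw [map_add, map_mul, hc₀, hc₁]
    field_simp
    ring
  -- `w c₀` is even and `w (c₁ * π)` odd, so `c₀ + c₁ * π` has no cancellation.
  have hle : w (c₀ + c₁ * π) ≤ w (c₁ * π) := by
    by_cases hc₁0 : c₁ = 0
    · simp [hc₁0]
    have hne : w c₀ ≠ w (c₁ * π) := by
      obtain ⟨k₁, hk₁⟩ := WithTop.ne_top_iff_exists.1 (w.ne_top_iff.2 hc₁0)
      intro h
      rw [AddValuation.map_mul, hπ, ← hk₁] at h
      have hodd : Even (k₁ + 1) := hv_even c₀ hc₀ (k₁ + 1) (by rw [h]; push_cast; rfl)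
      exact Int.even_add_one.1 hodd (hv_even c₁ hc₁ k₁ hk₁.symm)
    rw [AddValuation.map_add_of_distinct_val _ hne]
    exact min_le_right _ _
  rw [hsub, AddValuation.map_mul, hd]
  exact le_add_of_nonneg_left (val_div_nonneg w ht hle)

lemma two_mul_le_val_mul {ε : E} (hε : w ε = 0) (hπ : w π = 1) {n : ℤ} (hn : 0 ≤ n) {s : E}
    (hs : 0 ≤ w s) : ((2 * n : ℤ) : WithTop ℤ) ≤ w (ε ^ n * π ^ (2 * n) * s) := by
  lift n to ℕ using hn
  have hpow : w (ε ^ (n : ℤ) * π ^ (2 * (n : ℤ))) = ((2 * n : ℤ) : WithTop ℤ) := by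
    rw [show 2 * (n : ℤ) = ((2 * n : ℕ) : ℤ) by push_cast; ring, zpow_natCast, zpow_natCast,
      AddValuation.map_mul, AddValuation.map_pow, AddValuation.map_pow, hε, hπ]
    simp only [nsmul_zero, zero_add, nsmul_one]
    norm_cast
  rw [AddValuation.map_mul, hpow]
  exact le_add_of_nonneg_right hs

lemma val_Pel (hτ : ∀ x : E, w (τ x) = w x) {ε : E} (hε : w ε = 0) (hπ : w π = 1) {n : ℤ}
    (hn : 0 < n) {r : E} (hr : 0 ≤ w r) : w (Pel τ ε π n r) = 0 := by
  have hX : w 1 < w (ε ^ n * π ^ (2 * n) * (r * τ r)) := by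
    refine lt_of_lt_of_le ?_ (two_mul_le_val_mul w hε hπ hn.le ?_)
    · rw [AddValuation.map_one]; exact_mod_cast (by omega : 0 < 2 * n)
    · rw [AddValuation.map_mul, hτ]; exact add_nonneg hr hr
  rw [Pel, mul_assoc _ r, AddValuation.map_add_eq_of_lt_left _ hX, AddValuation.map_one]

end Valuation

theorem statement4_general [CharP E 2]
    (τ : E →+* E)
    (v : E → WithTop ℤ)
    (hv_top : ∀ x : E, v x = ⊤ ↔ x = 0)
    (hv_mul : ∀ x y : E, v (x * y) = v x + v y)
    (hv_add : ∀ x y : E, min (v x) (v y) ≤ v (x + y))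
    (hv_tau : ∀ x : E, v (τ x) = v x)
    (π : E) (hπ : v π = 1)
    (hv_even : ∀ x : E, τ x = x → ∀ k : ℤ, v x = (k : WithTop ℤ) → Even k)
    (hbasis : ∀ y : E, ∃ c₀ c₁ : E, τ c₀ = c₀ ∧ τ c₁ = c₁ ∧ y = c₀ + c₁ * π)
    (d : ℤ)
    (ε : E) (hε : ε = τ π / π)
    (hεd : v (ε - 1) = (d : WithTop ℤ))
    (n m : ℤ) (hn : 1 ≤ n) (hmb : m ≤ 2 * n + d - 1)
    (t : E) (ht : t ≠ 0) (r : E) (hr : (0 : WithTop ℤ) ≤ v r) :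
    ∃ j ∈ IEr v (2 * m + 1),
      imat τ ε π n t 0 * imat τ ε π n 1 r * (imat τ ε π n t 0)⁻¹ * (imat τ ε π n 1 r)⁻¹ =
        ep ((1 + t * (τ t)⁻¹) * r) * j := by
  let w := addValuationOf v hv_top hv_mul hv_add
  have hπ0 : π ≠ 0 := by rintro rfl; simp [(hv_top 0).2] at hπ
  have hτ : ∀ x : E, w (τ x) = w x := hv_tau
  have hε0 : w ε = 0 := hε ▸ val_div_eq_zero w hπ0 (hτ π)
  have hP : w (Pel τ ε π n r) = 0 := val_Pel w τ hτ hε0 hπ (by omega) hr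
  have hP0 : Pel τ ε π n r ≠ 0 := by intro h; simp [h] at hP
  set c := ε ^ n * π ^ (2 * n) * τ r * (Pel τ ε π n r)⁻¹ with hc_def
  have hc : ((2 * n : ℤ) : WithTop ℤ) ≤ w c := by
    rw [hc_def, mul_assoc]
    refine two_mul_le_val_mul w hε0 hπ (by omega) ?_
    rw [AddValuation.map_mul, AddValuation.map_inv, hP, hτ, neg_zero, add_zero]
    exact hr
  have htrace : (d : WithTop ℤ) ≤ w (τ t / t - 1) :=
    le_val_div_self_sub_one w τ hπ hv_even hbasis (hε ▸ hεd) ht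
  refine ⟨_, ep_mul_em_mul_ep_neg_mem_IEr w hr (b := (τ t / t - 1) * c) ?_, ?_⟩
  · rw [AddValuation.map_mul]
    exact le_trans (by exact_mod_cast (by omega : m + 1 ≤ d + 2 * n)) (add_le_add htrace hc)
  · rw [imat_zero, imat_one, e0_commutator r _ ht ((map_ne_zero τ).2 ht) (inv_ne_zero hP0),
      CharTwo.sub_eq_add, add_comm, div_eq_mul_inv]

theorem statement4 [CharP E 2]
    (τ : E →+* E) (hττ : ∀ x : E, τ (τ x) = x) (hτne : τ ≠ RingHom.id E)
    (v : E → WithTop ℤ)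
    (hv_top : ∀ x : E, v x = ⊤ ↔ x = 0)
    (hv_mul : ∀ x y : E, v (x * y) = v x + v y)
    (hv_add : ∀ x y : E, min (v x) (v y) ≤ v (x + y))
    (hv_tau : ∀ x : E, v (τ x) = v x)
    (π : E) (hπ : v π = 1)
    (hv_even : ∀ x : E, τ x = x → ∀ k : ℤ, v x = (k : WithTop ℤ) → Even k)
    (hbasis : ∀ y : E, ∃ c₀ c₁ : E, τ c₀ = c₀ ∧ τ c₁ = c₁ ∧ y = c₀ + c₁ * π)
    (d : ℤ) (hd : 0 < d) (hdodd : Odd d)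
    (ε : E) (hε : ε = τ π / π)
    (hεd : v (ε - 1) = (d : WithTop ℤ))
    (n m : ℤ) (hn : 1 ≤ n) (hm : 0 ≤ m) (h2n : d < 2 * n) (hmb : m ≤ 2 * n + d - 1)
    (t : E) (ht : t ≠ 0) (r : E) (hr : (0 : WithTop ℤ) ≤ v r) :
    ∃ j ∈ IEr v (2 * m + 1),
      imat τ ε π n t 0 * imat τ ε π n 1 r * (imat τ ε π n t 0)⁻¹ * (imat τ ε π n 1 r)⁻¹ =
        ep ((1 + t * (τ t)⁻¹) * r) * j :=
  statement4_general τ v hv_top hv_mul hv_add hv_tau π hπ hv_even hbasis d ε hε hεd n m hn hmb t ht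
    r hr

end ADLV
end
end

section
/- (Multiplication rule in Γ̃ modulo Γ′.) Assume n ≥ 1, m ≥ 0, 2n > d and m ≤ 2n + d − 1. For all t, t′ ∈ E^× and r, u ∈ O_E there exist ρ ∈ p_E^d and j ∈ I_E^{2m+1} such that i(t,r)·i(t′,u) = i(t·t′·(1 + π^{2n}ru), r + u)·i(1,ρ)·j. -/
/-!
Write `i(t, r) = P_r⁻¹ • M(t, r)` with `M(t, r) = [[t, r τt], [b t τr, τt]]` and `b = εⁿπ^{2n}`
(this uses characteristic 2). With `T = t t' (1 + π^{2n} r u)`, `V = M(t, r) M(t', u)` and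
`U = M(T, r + u) M(1, ρ)`, the required `j` is `c • adj(U) V` for a scalar `c`, and
`j = (c det U) • 1 + c • adj(U) (V - U)`. Choosing `ρ` so that the upper right entries of `U` and
`V` agree, every entry of `V - U` has valuation at least `v(T) + 2n + d`, and `c det U ≡ 1`
modulo `p_E^{2n+d}`. Both come from `v(τ x - x) ≥ v x + d` for all `x` (write `x = c₀ + c₁π` with
`c₀, c₁ ∈ F`; valuations on `F` are even, so `v x ≤ v(c₁π)`) and from
`b - π^{2n} = πⁿ (τ(πⁿ) - πⁿ)`. So `j ≡ 1` modulo `p_E^{2n+d}`, and `j ∈ I_E^{2m+1}` as `m < 2n + d`.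
-/

open Matrix

noncomputable section

namespace ADLV

variable {E : Type*} [Field E]

section Valuation

theorem map_one_of_map_mul {f : E → WithTop ℤ} (h1 : f 1 ≠ ⊤)
    (hf : ∀ x y : E, f (x * y) = f x + f y) : f 1 = 0 := by
  obtain ⟨a, ha⟩ := WithTop.ne_top_iff_exists.1 h1
  have h := hf 1 1
  rw [one_mul, ← ha] at h
  rw [← ha]
  norm_cast at h ⊢
  omega

variable (v : AddValuation E (WithTop ℤ))

theorem le_map_mul {x y : E} {a b c : ℤ} (hx : (a : WithTop ℤ) ≤ v x)
    (hy : (b : WithTop ℤ) ≤ v y) (h : c ≤ a + b) : (c : WithTop ℤ) ≤ v (x * y) := by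
  rw [v.map_mul]
  exact (WithTop.coe_le_coe.2 h).trans (WithTop.coe_add a b ▸ add_le_add hx hy)

theorem map_one_add_eq_zero {y : E} (hy : 0 < v y) : v (1 + y) = 0 := by
  rw [v.map_add_eq_of_lt_left (v.map_one ▸ hy), v.map_one]

theorem le_map_mul_apply {l m n : Type*} [Fintype m] {A : Matrix l m E} {B : Matrix m n E}
    {a b c : ℤ} (hA : ∀ i j, (a : WithTop ℤ) ≤ v (A i j))
    (hB : ∀ i j, (b : WithTop ℤ) ≤ v (B i j)) (h : c ≤ a + b) (i : l) (j : n) :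
    (c : WithTop ℤ) ≤ v ((A * B) i j) :=
  v.map_le_sum fun x _ => le_map_mul v (hA i x) (hB x j) h

theorem smul_adjugate_mul_mem_IEr {U V : Matrix (Fin 2) (Fin 2) E} {c : E} {a k m : ℤ}
    (hU : ∀ i j, (a : WithTop ℤ) ≤ v (U i j))
    (hW : ∀ i j, ((a + k : ℤ) : WithTop ℤ) ≤ v ((V - U) i j))
    (hc : ((-(2 * a) : ℤ) : WithTop ℤ) ≤ v c) (hdet : (k : WithTop ℤ) ≤ v (c * U.det - 1))
    (hmk : m + 1 ≤ k) :
    c • (U.adjugate * V) ∈ IEr v (2 * m + 1) := by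
  have hadj : ∀ i j, (a : WithTop ℤ) ≤ v (U.adjugate i j) := by
    intro i j
    fin_cases i <;> fin_cases j <;> simp [adjugate_fin_two, hU]
  have hX : ∀ i j, (k : WithTop ℤ) ≤ v (c * (U.adjugate * (V - U)) i j) := fun i j =>
    le_map_mul v hc (le_map_mul_apply v hadj hW le_rfl i j) (by omega)
  have hdecomp : c • (U.adjugate * V) = (c * U.det) • 1 + c • (U.adjugate * (V - U)) := by
    rw [mul_sub, adjugate_mul, smul_sub, smul_smul]
    abel
  have hle : ∀ {l : ℤ} {x : E}, l ≤ k → (k : WithTop ℤ) ≤ v x → (l : WithTop ℤ) ≤ v x :=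
    fun hl hx => (WithTop.coe_le_coe.2 hl).trans hx
  rw [hdecomp]
  refine ⟨?_, ?_, ?_, ?_⟩ <;> simp only [Matrix.add_apply, Matrix.smul_apply, one_apply_eq,
    one_apply_ne zero_ne_one, one_apply_ne one_ne_zero, smul_eq_mul, mul_one, mul_zero, zero_add]
  · rw [add_sub_right_comm]
    exact hle (by omega) (v.map_le_add hdet (hX 0 0))
  · exact hle (by omega) (hX 0 1)
  · exact hle (by omega) (hX 1 0)
  · rw [add_sub_right_comm]
    exact hle (by omega) (v.map_le_add hdet (hX 1 1))

end Valuation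

section Conjugation

variable (v : AddValuation E (WithTop ℤ)) {τ : E →+* E} {π : E} {d : ℤ}

theorem map_ne_map_mul_of_fixed (hπ : v π = 1)
    (hv_even : ∀ x : E, τ x = x → ∀ k : ℤ, v x = (k : WithTop ℤ) → Even k)
    {c₀ c₁ : E} (hc₀ : τ c₀ = c₀) (hc₁ : τ c₁ = c₁) (h0 : c₁ ≠ 0) : v c₀ ≠ v (c₁ * π) := by
  obtain ⟨k, hk⟩ := WithTop.ne_top_iff_exists.1 (v.ne_top_iff.2 h0)
  intro h
  rw [v.map_mul, hπ, ← hk] at h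
  have hodd : ¬Even (k + 1) := by
    simpa [Int.even_add_one] using hv_even c₁ hc₁ k hk.symm
  exact hodd (hv_even c₀ hc₀ (k + 1) (by rw [h]; rfl))

theorem le_map_conj_sub (hπ : v π = 1)
    (hv_even : ∀ x : E, τ x = x → ∀ k : ℤ, v x = (k : WithTop ℤ) → Even k)
    (hbasis : ∀ y : E, ∃ c₀ c₁ : E, τ c₀ = c₀ ∧ τ c₁ = c₁ ∧ y = c₀ + c₁ * π)
    {ε : E} (hτπ : τ π = ε * π) (hε : (d : WithTop ℤ) ≤ v (ε - 1)) (x : E) :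
    v x + d ≤ v (τ x - x) := by
  obtain ⟨c₀, c₁, hc₀, hc₁, rfl⟩ := hbasis x
  have hsub : τ (c₀ + c₁ * π) - (c₀ + c₁ * π) = c₁ * π * (ε - 1) := by
    rw [map_add, map_mul, hc₀, hc₁, hτπ]
    ring
  rcases eq_or_ne c₁ 0 with rfl | h0
  · simp [hc₀]
  have hx : v (c₀ + c₁ * π) ≤ v (c₁ * π) := by
    rw [v.map_add_of_distinct_val (map_ne_map_mul_of_fixed v hπ hv_even hc₀ hc₁ h0)]
    exact min_le_right _ _
  rw [hsub, v.map_mul]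
  exact add_le_add hx hε

theorem le_map_conj_sub_of_le (hkey : ∀ x, v x + d ≤ v (τ x - x)) {x : E} {a : ℤ}
    (hx : (a : WithTop ℤ) ≤ v x) : ((a + d : ℤ) : WithTop ℤ) ≤ v (τ x - x) := by
  push_cast
  exact (add_le_add_left hx _).trans (hkey x)

end Conjugation

section Matrices

variable (τ : E →+* E)

-- `M(t, r)` and `P_r` with `εⁿπ^{2n}` replaced by an arbitrary `b` (see `imat_eq_smul`).
def mmat (b t r : E) : Matrix (Fin 2) (Fin 2) E := !![t, r * τ t; b * t * τ r, τ t]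

def pel (b x : E) : E := 1 + b * x * τ x

theorem imat_eq_smul [CharP E 2] (ε π : E) (n : ℤ) (t r : E)
    (hP : pel τ (ε ^ n * π ^ (2 * n)) r ≠ 0) :
    imat τ ε π n t r = (pel τ (ε ^ n * π ^ (2 * n)) r)⁻¹ • mmat τ (ε ^ n * π ^ (2 * n)) t r := by
  rw [imat, show Pel τ ε π n r = pel τ (ε ^ n * π ^ (2 * n)) r from rfl]
  generalize ε ^ n * π ^ (2 * n) = b at *
  have h00 : 1 + r * (b * τ r * (pel τ b r)⁻¹) = (pel τ b r)⁻¹ := by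
    have h : pel τ b r + b * r * τ r = 1 := by
      rw [pel]
      linear_combination (b * r * τ r) * CharTwo.two_eq_zero (R := E)
    field_simp
    linear_combination h
  simp only [ep, em, e0, mmat, mul_fin_two, smul_of, one_mul, mul_one, mul_zero,
    add_zero, zero_add, h00, smul_cons, smul_eq_mul, smul_empty]
  ext i j
  fin_cases i <;> fin_cases j <;> simp <;> ring

theorem det_mmat [CharP E 2] (b t r : E) : (mmat τ b t r).det = t * τ t * pel τ b r := by
  rw [mmat, det_fin_two_of, pel]
  linear_combination (-(b * r * τ r * t * τ t)) * CharTwo.two_eq_zero (R := E)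

theorem mul_smul_eq_mul_smul_mul_adjugate {n : Type*} [Fintype n] [DecidableEq n]
    {s₁ s₂ s₃ s₄ c : E} {N₁ N₂ N₃ N₄ : Matrix n n E}
    (h : s₁ * s₂ * (c * (N₁ * N₂).det) = s₃ * s₄) :
    (s₃ • N₃) * (s₄ • N₄) = (s₁ • N₁) * (s₂ • N₂) * (c • ((N₁ * N₂).adjugate * (N₃ * N₄))) := by
  simp only [Matrix.smul_mul, Matrix.mul_smul, smul_smul, ← Matrix.mul_assoc, mul_adjugate,
    Matrix.one_mul]
  congr 1
  linear_combination -h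

variable (v : AddValuation E (WithTop ℤ))

theorem map_pel {b x : E} (hτv : ∀ x, v (τ x) = v x) (hb : 0 < v b) (hx : 0 ≤ v x) :
    v (pel τ b x) = 0 := by
  refine map_one_add_eq_zero v ?_
  rw [v.map_mul, v.map_mul, hτv]
  exact hb.trans_le (le_add_of_nonneg_right hx |>.trans (le_add_of_nonneg_right hx))

theorem pel_ne_zero {b x : E} (hτv : ∀ x, v (τ x) = v x) (hb : 0 < v b) (hx : 0 ≤ v x) :
    pel τ b x ≠ 0 :=
  v.ne_top_iff.1 (by simp [map_pel τ v hτv hb hx])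

theorem le_map_mmat_apply {a : ℤ} {b t r : E} (hτv : ∀ x, v (τ x) = v x) (hb : 0 ≤ v b)
    (ht : (a : WithTop ℤ) ≤ v t) (hr : 0 ≤ v r) (i j : Fin 2) :
    (a : WithTop ℤ) ≤ v (mmat τ b t r i j) := by
  fin_cases i <;> fin_cases j
  · exact ht
  · exact le_map_mul v hr (hτv t ▸ ht) (by simp)
  · exact le_map_mul v (le_map_mul v hb ht (c := a) (by simp)) (hτv r ▸ hr) (by simp)
  · exact hτv t ▸ ht

end Matrices

section Product

variable (v : AddValuation E (WithTop ℤ)) {τ : E →+* E} {d k m a₁ a₂ : ℤ} {b p t t' r u T ρ : E}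

theorem map_mul_mul_one_add (hk : 0 < k) (hp : (k : WithTop ℤ) ≤ v p) (hr : 0 ≤ v r)
    (hu : 0 ≤ v u) (ht : v t = a₁) (ht' : v t' = a₂) :
    v (t * t' * (1 + p * r * u)) = ((a₁ + a₂ : ℤ) : WithTop ℤ) := by
  have hpru : 0 < v (p * r * u) :=
    lt_of_lt_of_le (by exact_mod_cast hk) (le_map_mul v (le_map_mul v hp hr (c := k) (by simp)) hu
      (by simp))
  rw [v.map_mul, v.map_mul, map_one_add_eq_zero v hpru, ht, ht', add_zero, WithTop.coe_add]

theorem le_map_of_mul_eq (hτv : ∀ x, v (τ x) = v x) (hkey : ∀ x, v x + d ≤ v (τ x - x))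
    (hdk : d ≤ k) (hp : (k : WithTop ℤ) ≤ v p) (hr : 0 ≤ v r) (hu : 0 ≤ v u)
    (ht : (a₁ : WithTop ℤ) ≤ v t) (ht' : (a₂ : WithTop ℤ) ≤ v t')
    (hT : T = t * t' * (1 + p * r * u))
    (hvT : v T = ((a₁ + a₂ : ℤ) : WithTop ℤ))
    (hρ : T * ρ = τ t' * (t * u + r * τ t) - (r + u) * τ T) : (d : WithTop ℤ) ≤ v ρ := by
  have hnum : τ t' * (t * u + r * τ t) - (r + u) * τ T
      = τ t' * (u * (t - τ t) - (r + u) * τ t * τ p * τ r * τ u) := by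
    rw [hT]
    simp only [map_mul, map_add, map_one]
    ring
  have hτt := hτv t ▸ ht
  have hdiff : ((a₁ + d : ℤ) : WithTop ℤ) ≤ v (t - τ t) :=
    v.map_sub_swap (τ t) t ▸ le_map_conj_sub_of_le v hkey ht
  have hsmall : ((a₁ + d : ℤ) : WithTop ℤ) ≤ v ((r + u) * τ t * τ p * τ r * τ u) :=
    le_map_mul v (le_map_mul v (le_map_mul v (le_map_mul v (v.map_le_add hr hu) hτt le_rfl)
      (hτv p ▸ hp) le_rfl) (hτv r ▸ hr) le_rfl) (hτv u ▸ hu) (by omega)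
  have hnum_le : ((a₁ + a₂ + d : ℤ) : WithTop ℤ) ≤ v (T * ρ) := by
    rw [hρ, hnum]
    exact le_map_mul v (hτv t' ▸ ht')
      (v.map_le_sub (le_map_mul v hu hdiff (by omega)) hsmall) (by omega)
  rw [v.map_mul, hvT] at hnum_le
  rw [← WithTop.add_le_add_iff_left (WithTop.coe_ne_top (a := a₁ + a₂))]
  exact_mod_cast hnum_le

theorem mmat_mul_sub_mmat_mul (hT : T = t * t' * (1 + p * r * u))
    (hρ : T * ρ = τ t' * (t * u + r * τ t) - (r + u) * τ T) :
    mmat τ b t r * mmat τ b t' u - mmat τ b T (r + u) * mmat τ b 1 ρ =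
      !![r * t' * ((b - p) * τ t * τ u + p * (τ t * τ u - t * u)) - b * (r + u) * τ T * τ ρ, 0;
        b * (t' * τ u * (τ t - t) - t * t' * (p * r * u) * (τ r + τ u) - τ T * τ ρ),
        τ r * τ t' * ((b - p) * t * u + p * (t * u - τ t * τ u) + (p - τ p) * (τ t * τ u))
          - b * T * τ (r + u) * ρ] := by
  have hτT : τ T = τ t * τ t' * (1 + τ p * τ r * τ u) := by
    rw [hT]
    simp only [map_mul, map_add, map_one]
  refine Matrix.ext ?_
  simp only [Fin.forall_fin_two, Matrix.sub_apply, mul_apply, Fin.sum_univ_two, mmat, of_apply,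
    cons_val_zero, cons_val_one, map_one, map_add]
  refine ⟨⟨?_, ?_⟩, ?_, ?_⟩
  · linear_combination -hT
  · linear_combination -hρ
  · linear_combination (-b * (τ r + τ u)) * hT
  · linear_combination -hτT

theorem le_map_mmat_mul_sub_apply (hτv : ∀ x, v (τ x) = v x)
    (hkey : ∀ x, v x + d ≤ v (τ x - x)) (hdk : d ≤ k) (hp : (k : WithTop ℤ) ≤ v p)
    (hb : (k : WithTop ℤ) ≤ v b) (hbp : ((k + d : ℤ) : WithTop ℤ) ≤ v (b - p)) (hr : 0 ≤ v r)
    (hu : 0 ≤ v u) (ht : (a₁ : WithTop ℤ) ≤ v t) (ht' : (a₂ : WithTop ℤ) ≤ v t')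
    (hT : T = t * t' * (1 + p * r * u)) (hvT : ((a₁ + a₂ : ℤ) : WithTop ℤ) ≤ v T)
    (hρ : T * ρ = τ t' * (t * u + r * τ t) - (r + u) * τ T) (hρd : (d : WithTop ℤ) ≤ v ρ)
    (i j : Fin 2) :
    ((a₁ + a₂ + (k + d) : ℤ) : WithTop ℤ) ≤
      v ((mmat τ b t r * mmat τ b t' u - mmat τ b T (r + u) * mmat τ b 1 ρ) i j) := by
  have hτt := hτv t ▸ ht
  have hτu := hτv u ▸ hu
  have hτr := hτv r ▸ hr
  have hτρ := hτv ρ ▸ hρd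
  have hτT := hτv T ▸ hvT
  have hru := v.map_le_add hr hu
  have htu : ((a₁ + d : ℤ) : WithTop ℤ) ≤ v (τ t * τ u - t * u) := by
    rw [← map_mul]
    exact le_map_conj_sub_of_le v hkey (le_map_mul v ht hu (by omega))
  have hp_conj : ((k + d : ℤ) : WithTop ℤ) ≤ v (p - τ p) :=
    v.map_sub_swap (τ p) p ▸ le_map_conj_sub_of_le v hkey hp
  have h00 : ((a₁ + a₂ + (k + d) : ℤ) : WithTop ℤ) ≤
      v (r * t' * ((b - p) * τ t * τ u + p * (τ t * τ u - t * u)) - b * (r + u) * τ T * τ ρ) := by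
    refine v.map_le_sub (le_map_mul v (le_map_mul v hr ht' le_rfl) (v.map_le_add
      (le_map_mul v (le_map_mul v hbp hτt le_rfl) hτu (c := a₁ + (k + d)) (by omega))
      (le_map_mul v hp htu (by omega))) (by omega)) ?_
    exact le_map_mul v (le_map_mul v (le_map_mul v hb hru le_rfl) hτT le_rfl) hτρ (by omega)
  have h10 : ((a₁ + a₂ + (k + d) : ℤ) : WithTop ℤ) ≤
      v (b * (t' * τ u * (τ t - t) - t * t' * (p * r * u) * (τ r + τ u) - τ T * τ ρ)) := by
    refine le_map_mul v hb (c := a₁ + a₂ + (k + d)) (b := a₁ + a₂ + d) (v.map_le_sub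
      (v.map_le_sub ?_ ?_) ?_) (by omega)
    · exact le_map_mul v (le_map_mul v ht' hτu le_rfl) (le_map_conj_sub_of_le v hkey ht)
        (by omega)
    · exact le_map_mul v (le_map_mul v (le_map_mul v ht ht' le_rfl)
        (le_map_mul v (le_map_mul v hp hr le_rfl) hu le_rfl) le_rfl) (v.map_le_add hτr hτu)
        (by omega)
    · exact le_map_mul v hτT hτρ (by omega)
  have h11 : ((a₁ + a₂ + (k + d) : ℤ) : WithTop ℤ) ≤
      v (τ r * τ t' * ((b - p) * t * u + p * (t * u - τ t * τ u) + (p - τ p) * (τ t * τ u))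
        - b * T * τ (r + u) * ρ) := by
    refine v.map_le_sub (le_map_mul v (le_map_mul v hτr (hτv t' ▸ ht') le_rfl)
      (c := a₁ + a₂ + (k + d)) (b := a₁ + (k + d)) (v.map_le_add (v.map_le_add ?_ ?_) ?_) (by omega)) ?_
    · exact le_map_mul v (le_map_mul v hbp ht le_rfl) hu (by omega)
    · exact le_map_mul v hp (v.map_sub_swap (τ t * τ u) (t * u) ▸ htu) (by omega)
    · exact le_map_mul v hp_conj (le_map_mul v hτt hτu le_rfl) (by omega)
    · exact le_map_mul v (le_map_mul v (le_map_mul v hb hvT le_rfl) (hτv (r + u) ▸ hru)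
        le_rfl) hρd (by omega)
  rw [mmat_mul_sub_mmat_mul hT hρ]
  fin_cases i <;> fin_cases j
  · exact h00
  · simp
  · exact h10
  · exact h11

theorem le_map_pel_mul_pel_sub [CharP E 2] (hτv : ∀ x, v (τ x) = v x)
    (hkey : ∀ x, v x + d ≤ v (τ x - x)) (hd : 0 ≤ d) (hdk : d ≤ k) (hb : (k : WithTop ℤ) ≤ v b)
    (hr : 0 ≤ v r) (hu : 0 ≤ v u) (hρd : (d : WithTop ℤ) ≤ v ρ) :
    ((k + d : ℤ) : WithTop ℤ) ≤ v (pel τ b (r + u) * pel τ b ρ - pel τ b r * pel τ b u) := by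
  have hexp : pel τ b (r + u) * pel τ b ρ - pel τ b r * pel τ b u
      = b * (r * (τ u - u) + u * (τ r - r)) - b * b * (r * τ r * (u * τ u))
        + pel τ b (r + u) * (b * ρ * τ ρ) := by
    simp only [pel, map_add]
    linear_combination (b * r * u) * CharTwo.two_eq_zero (R := E)
  have hru := v.map_le_add hr hu
  have hpel : 0 ≤ v (pel τ b (r + u)) :=
    v.map_le_add (by simp) (le_map_mul v (le_map_mul v hb hru (c := 0) (by omega))
      (hτv (r + u) ▸ hru) (by simp))
  rw [hexp]
  refine v.map_le_add (v.map_le_sub ?_ ?_) ?_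
  · exact le_map_mul v hb (v.map_le_add (le_map_mul v hr (le_map_conj_sub_of_le v hkey hu) le_rfl)
      (le_map_mul v hu (le_map_conj_sub_of_le v hkey hr) le_rfl)) (by omega)
  · exact le_map_mul v (le_map_mul v hb hb le_rfl) (le_map_mul v (le_map_mul v hr (hτv r ▸ hr)
      le_rfl) (le_map_mul v hu (hτv u ▸ hu) le_rfl) le_rfl) (by omega)
  · exact le_map_mul v hpel (le_map_mul v (le_map_mul v hb hρd le_rfl) (hτv ρ ▸ hρd) le_rfl)
      (by omega)

theorem exists_mul_eq_mul_mul_mem_IEr [CharP E 2] (hτv : ∀ x, v (τ x) = v x)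
    (hkey : ∀ x, v x + d ≤ v (τ x - x)) (hd : 0 < d) (hdk : d ≤ k) (hmk : m + 1 ≤ k + d)
    (hp : (k : WithTop ℤ) ≤ v p) (hb : (k : WithTop ℤ) ≤ v b)
    (hbp : ((k + d : ℤ) : WithTop ℤ) ≤ v (b - p)) (ht : t ≠ 0) (ht' : t' ≠ 0) (hr : 0 ≤ v r)
    (hu : 0 ≤ v u) :
    ∃ ρ : E, (d : WithTop ℤ) ≤ v ρ ∧ ∃ j ∈ IEr v (2 * m + 1),
      (pel τ b r)⁻¹ • mmat τ b t r * ((pel τ b u)⁻¹ • mmat τ b t' u) =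
        (pel τ b (r + u))⁻¹ • mmat τ b (t * t' * (1 + p * r * u)) (r + u) *
          ((pel τ b ρ)⁻¹ • mmat τ b 1 ρ) * j := by
  obtain ⟨a₁, ha₁⟩ := WithTop.ne_top_iff_exists.1 (v.ne_top_iff.2 ht)
  obtain ⟨a₂, ha₂⟩ := WithTop.ne_top_iff_exists.1 (v.ne_top_iff.2 ht')
  have hb0 : 0 < v b := (WithTop.coe_lt_coe.2 (by omega : (0 : ℤ) < k)).trans_le hb
  have hru := v.map_le_add hr hu
  set T := t * t' * (1 + p * r * u) with hT
  have hvT : v T = ((a₁ + a₂ : ℤ) : WithTop ℤ) :=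
    map_mul_mul_one_add v (by omega) hp hr hu ha₁.symm ha₂.symm
  have hT0 : T ≠ 0 := v.ne_top_iff.1 (by simp [hvT])
  set ρ := (τ t' * (t * u + r * τ t) - (r + u) * τ T) / T
  have hρ : T * ρ = τ t' * (t * u + r * τ t) - (r + u) * τ T := mul_div_cancel₀ _ hT0
  have hρd := le_map_of_mul_eq v hτv hkey hdk hp hr hu ha₁.le ha₂.le hT hvT hρ
  have hρ0 : 0 ≤ v ρ := (WithTop.coe_le_coe.2 hd.le).trans hρd
  have hpel : ∀ x, 0 ≤ v x → v (pel τ b x) = 0 := fun x hx => map_pel τ v hτv hb0 hx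
  have hpel0 : ∀ x, 0 ≤ v x → pel τ b x ≠ 0 := fun x hx => pel_ne_zero τ v hτv hb0 hx
  have hdetU : (mmat τ b T (r + u) * mmat τ b 1 ρ).det
      = T * τ T * (pel τ b (r + u) * pel τ b ρ) := by
    rw [det_mul, det_mmat, det_mmat, map_one]
    ring
  have hτT0 : τ T ≠ 0 := (map_ne_zero τ).2 hT0
  set c := (pel τ b r * pel τ b u * T * τ T)⁻¹ with hc
  refine ⟨ρ, hρd, _,
    smul_adjugate_mul_mem_IEr v (c := c) (a := a₁ + a₂) (k := k + d) ?_ ?_ ?_ ?_ hmk,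
    mul_smul_eq_mul_smul_mul_adjugate ?_⟩
  · exact le_map_mul_apply v (le_map_mmat_apply τ v hτv hb0.le hvT.ge hru)
      (le_map_mmat_apply τ v hτv hb0.le (a := 0) (by simp) hρ0) (by omega)
  · exact le_map_mmat_mul_sub_apply v hτv hkey hdk hp hb hbp hr hu ha₁.le ha₂.le hT
      hvT.ge hρ hρd
  · refine le_of_eq ?_
    simp only [c, v.map_inv, v.map_mul, hpel r hr, hpel u hu, hτv, hvT]
    norm_cast
    ring
  · have hexp : c * (mmat τ b T (r + u) * mmat τ b 1 ρ).det - 1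
        = (pel τ b (r + u) * pel τ b ρ - pel τ b r * pel τ b u) * (pel τ b r * pel τ b u)⁻¹ := by
      rw [hdetU, hc]
      field_simp [hpel0 r hr, hpel0 u hu, hT0, hτT0]
    rw [hexp]
    refine le_map_mul v (le_map_pel_mul_pel_sub v hτv hkey hd.le hdk hb hr hu hρd) (b := 0)
      (by simp [hpel r hr, hpel u hu]) (by omega)
  · rw [hdetU, hc]
    field_simp [hpel0 r hr, hpel0 u hu, hpel0 _ hru, hpel0 ρ hρ0, hT0, hτT0]

theorem exists_imat_mul_eq_mem_IEr [CharP E 2] (hτv : ∀ x, v (τ x) = v x)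
    (hkey : ∀ x, v x + d ≤ v (τ x - x)) {π ε : E} (hπ : v π = 1) (hτπ : τ π = ε * π)
    (hd : 0 < d) {N : ℕ} (h2N : d < 2 * N) (hmN : m + 1 ≤ 2 * N + d) (ht : t ≠ 0) (ht' : t' ≠ 0)
    (hr : 0 ≤ v r) (hu : 0 ≤ v u) :
    ∃ ρ : E, (d : WithTop ℤ) ≤ v ρ ∧ ∃ j ∈ IEr v (2 * m + 1),
      imat τ ε π N t r * imat τ ε π N t' u =
        imat τ ε π N (t * t' * (1 + π ^ (2 * (N : ℤ)) * r * u)) (r + u) * imat τ ε π N 1 ρ * j := by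
  have hπ0 : π ≠ 0 := v.ne_top_iff.1 (by simp [hπ])
  have hπN : v (π ^ (N : ℤ)) = (N : ℤ) := by
    rw [zpow_natCast, v.map_pow, hπ]
    simp
  have hp : π ^ (2 * (N : ℤ)) = π ^ (N : ℤ) * π ^ (N : ℤ) := by rw [two_mul, zpow_add₀ hπ0]
  have hb : ε ^ (N : ℤ) * π ^ (2 * (N : ℤ)) = τ (π ^ (N : ℤ)) * π ^ (N : ℤ) := by
    rw [hp, ← mul_assoc, ← mul_zpow, ← hτπ, map_zpow₀]
  have hvp : ((2 * N : ℤ) : WithTop ℤ) ≤ v (π ^ (2 * (N : ℤ))) :=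
    hp ▸ le_map_mul v hπN.ge hπN.ge (by omega)
  have hvb : ((2 * N : ℤ) : WithTop ℤ) ≤ v (ε ^ (N : ℤ) * π ^ (2 * (N : ℤ))) :=
    hb ▸ le_map_mul v (hτv _ ▸ hπN.ge) hπN.ge (by omega)
  have hbp : ((2 * N + d : ℤ) : WithTop ℤ) ≤
      v (ε ^ (N : ℤ) * π ^ (2 * (N : ℤ)) - π ^ (2 * (N : ℤ))) := by
    rw [hb, hp, ← sub_mul]
    exact le_map_mul v (le_map_conj_sub_of_le v hkey hπN.ge) hπN.ge (by omega)
  obtain ⟨ρ, hρd, j, hj, h⟩ := exists_mul_eq_mul_mul_mem_IEr v (k := 2 * N) (m := m) hτv hkey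
    hd h2N.le hmN hvp hvb hbp ht ht' hr hu
  have hP := fun x (hx : 0 ≤ v x) =>
    pel_ne_zero τ v hτv ((WithTop.coe_lt_coe.2 (by omega : (0 : ℤ) < 2 * N)).trans_le hvb) hx
  refine ⟨ρ, hρd, j, hj, ?_⟩
  rw [imat_eq_smul τ ε π _ t r (hP r hr), imat_eq_smul τ ε π _ t' u (hP u hu),
    imat_eq_smul τ ε π _ _ _ (hP _ (v.map_le_add hr hu)),
    imat_eq_smul τ ε π _ 1 ρ (hP ρ ((WithTop.coe_le_coe.2 hd.le).trans hρd))]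
  exact h

end Product

theorem statement6_general [CharP E 2]
    (τ : E →+* E)
    (v : E → WithTop ℤ)
    (hv_top : ∀ x : E, v x = ⊤ ↔ x = 0)
    (hv_mul : ∀ x y : E, v (x * y) = v x + v y)
    (hv_add : ∀ x y : E, min (v x) (v y) ≤ v (x + y))
    (hv_tau : ∀ x : E, v (τ x) = v x)
    (π : E) (hπ : v π = 1)
    (hv_even : ∀ x : E, τ x = x → ∀ k : ℤ, v x = (k : WithTop ℤ) → Even k)
    (hbasis : ∀ y : E, ∃ c₀ c₁ : E, τ c₀ = c₀ ∧ τ c₁ = c₁ ∧ y = c₀ + c₁ * π)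
    (d : ℤ) (hd : 0 < d)
    (ε : E) (hε : ε = τ π / π)
    (hεd : v (ε - 1) = (d : WithTop ℤ))
    (n m : ℤ) (h2n : d < 2 * n) (hmb : m ≤ 2 * n + d - 1)
    (t t' : E) (ht : t ≠ 0) (ht' : t' ≠ 0)
    (r u : E) (hr : (0 : WithTop ℤ) ≤ v r) (hu : (0 : WithTop ℤ) ≤ v u) :
    ∃ ρ : E, (d : WithTop ℤ) ≤ v ρ ∧ ∃ j ∈ IEr v (2 * m + 1),
      imat τ ε π n t r * imat τ ε π n t' u =
        imat τ ε π n (t * t' * (1 + π ^ (2 * n) * r * u)) (r + u) * imat τ ε π n 1 ρ * j := by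
  obtain ⟨w, rfl⟩ : ∃ w : AddValuation E (WithTop ℤ), ⇑w = v :=
    ⟨AddValuation.of v ((hv_top 0).2 rfl)
      (map_one_of_map_mul (fun h => one_ne_zero ((hv_top 1).1 h)) hv_mul) hv_add hv_mul, rfl⟩
  have hτπ : τ π = ε * π := by rw [hε, div_mul_cancel₀ _ (w.ne_top_iff.1 (by simp [hπ]))]
  have hkey := le_map_conj_sub w hπ hv_even hbasis hτπ hεd.ge
  obtain ⟨N, rfl⟩ : ∃ N : ℕ, n = N := ⟨n.toNat, by omega⟩
  exact exists_imat_mul_eq_mem_IEr w hv_tau hkey hπ hτπ hd h2n (by omega) ht ht' hr hu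

theorem statement6 [CharP E 2]
    (τ : E →+* E) (hττ : ∀ x : E, τ (τ x) = x) (hτne : τ ≠ RingHom.id E)
    (v : E → WithTop ℤ)
    (hv_top : ∀ x : E, v x = ⊤ ↔ x = 0)
    (hv_mul : ∀ x y : E, v (x * y) = v x + v y)
    (hv_add : ∀ x y : E, min (v x) (v y) ≤ v (x + y))
    (hv_tau : ∀ x : E, v (τ x) = v x)
    (π : E) (hπ : v π = 1)
    (hv_even : ∀ x : E, τ x = x → ∀ k : ℤ, v x = (k : WithTop ℤ) → Even k)
    (hbasis : ∀ y : E, ∃ c₀ c₁ : E, τ c₀ = c₀ ∧ τ c₁ = c₁ ∧ y = c₀ + c₁ * π)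
    (d : ℤ) (hd : 0 < d) (hdodd : Odd d)
    (ε : E) (hε : ε = τ π / π)
    (hεd : v (ε - 1) = (d : WithTop ℤ))
    (n m : ℤ) (hn : 1 ≤ n) (hm : 0 ≤ m) (h2n : d < 2 * n) (hmb : m ≤ 2 * n + d - 1)
    (t t' : E) (ht : t ≠ 0) (ht' : t' ≠ 0)
    (r u : E) (hr : (0 : WithTop ℤ) ≤ v r) (hu : (0 : WithTop ℤ) ≤ v u) :
    ∃ ρ : E, (d : WithTop ℤ) ≤ v ρ ∧ ∃ j ∈ IEr v (2 * m + 1),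
      imat τ ε π n t r * imat τ ε π n t' u =
        imat τ ε π n (t * t' * (1 + π ^ (2 * n) * r * u)) (r + u) * imat τ ε π n 1 ρ * j :=
  statement6_general τ v hv_top hv_mul hv_add hv_tau π hπ hv_even hbasis d hd ε hε hεd n m h2n hmb t
    t' ht ht' r u hr hu

end ADLV
end
end

section
/- (Action of the Iwahori subgroup I_F on the coordinates.) Assume n ≥ 1, 2n > d and m = 2n + d − 1. Let g = [[g₁, g₂],[g₃, g₄]] ∈ I_F. Let a ∈ E with v(a) = 1, set R := π^{−(d+1)}·(τ(a) + a), and let B ∈ p_E, C, D ∈ U_E satisfy B + πⁿ·R⁻¹ ∈ p_E^{m+1} and ε^{(d+1)/2}·R⁻¹·D⁻¹·τ(C) ∈ U_E^{m+1}. Set x := e₋(a)·v̇·e₋(B)·e₀(C, D). Then g₂·a + g₁ ∈ U_E, and there exist B′ ∈ p_E, D′ ∈ U_E and j ∈ I_E^{2m+1} such that g·x = e₋((g₄·a + g₃)·(g₂·a + g₁)⁻¹)·v̇·e₋(B′)·e₀(det(g)·C·(g₂·a + g₁)⁻¹, D′)·j. -/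
open Matrix

noncomputable section

namespace ADLV

variable {E : Type*} [Field E]

/-!
Write `u = g₂a + g₁`. Moving `g` rightwards through `x` only permutes triangular factors:
`g·e₋(a) = e₋(a')·b` with `b = [[u, g₂], [0, det g / u]]` upper triangular; conjugating `b` by the
antidiagonal `v̇` makes it lower triangular; and a lower triangular matrix times `e₋(B)·e₀(C, D)` is
again of the form `e₋(B')·e₀(·, ·)`. So the identity holds with `j = 1`, and `B' ∈ p_E`, `D' ∈ U_E`
because `u` and `det g` are units for `g ∈ I_E`.
-/

theorem mul_em_eq_em_mul_upper (g : Matrix (Fin 2) (Fin 2) E) (a : E)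
    (hu : g 0 1 * a + g 0 0 ≠ 0) :
    g * em a = em ((g 1 1 * a + g 1 0) * (g 0 1 * a + g 0 0)⁻¹) *
      !![g 0 1 * a + g 0 0, g 0 1; 0, g.det * (g 0 1 * a + g 0 0)⁻¹] := by
  have hu' : a * g 0 1 + g 0 0 ≠ 0 := by rwa [mul_comm]
  rw [Matrix.det_fin_two]
  ext i j
  fin_cases i <;> fin_cases j <;> simp [em, Matrix.mul_apply, Fin.sum_univ_two] <;>
    field_simp <;> ring

theorem upper_mul_antidiag (α β δ y : E) {z : E} (hz : z ≠ 0) :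
    !![α, β; 0, δ] * !![0, z⁻¹; y, 0] = !![0, z⁻¹; y, 0] * !![δ, 0; β * y * z, α] := by
  ext i j
  fin_cases i <;> fin_cases j <;> simp [Matrix.mul_apply] <;> field_simp

theorem lower_mul_em_mul_e0 {p : E} (hp : p ≠ 0) (q r B C D : E) :
    !![p, 0; q, r] * em B * e0 C D = em ((q + r * B) / p) * e0 (p * C) (r * D) := by
  ext i j
  fin_cases i <;> fin_cases j <;> simp [em, e0, Matrix.mul_apply]
  field_simp

theorem mul_em_antidiag_em_e0 (g : Matrix (Fin 2) (Fin 2) E) (hdet : g.det ≠ 0) (a : E)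
    (hu : g 0 1 * a + g 0 0 ≠ 0) (y : E) {z : E} (hz : z ≠ 0) (B C D : E) :
    g * (em a * !![0, z⁻¹; y, 0] * em B * e0 C D) =
      em ((g 1 1 * a + g 1 0) * (g 0 1 * a + g 0 0)⁻¹) * !![0, z⁻¹; y, 0] *
        em ((g 0 1 * y * z + (g 0 1 * a + g 0 0) * B) / (g.det * (g 0 1 * a + g 0 0)⁻¹)) *
        e0 (g.det * C * (g 0 1 * a + g 0 0)⁻¹) ((g 0 1 * a + g 0 0) * D) := by
  have hp : g.det * (g 0 1 * a + g 0 0)⁻¹ ≠ 0 := mul_ne_zero hdet (inv_ne_zero hu)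
  calc g * (em a * !![0, z⁻¹; y, 0] * em B * e0 C D)
      = em ((g 1 1 * a + g 1 0) * (g 0 1 * a + g 0 0)⁻¹) *
          (!![g 0 1 * a + g 0 0, g 0 1; 0, g.det * (g 0 1 * a + g 0 0)⁻¹] *
            !![0, z⁻¹; y, 0]) * em B * e0 C D := by
        simp only [← Matrix.mul_assoc, mul_em_eq_em_mul_upper g a hu]
    _ = em ((g 1 1 * a + g 1 0) * (g 0 1 * a + g 0 0)⁻¹) * !![0, z⁻¹; y, 0] *
          (!![g.det * (g 0 1 * a + g 0 0)⁻¹, 0; g 0 1 * y * z, g 0 1 * a + g 0 0] *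
            em B * e0 C D) := by
        rw [upper_mul_antidiag _ _ _ _ hz]
        simp only [Matrix.mul_assoc]
    _ = _ := by
        rw [lower_mul_em_mul_e0 hp, mul_right_comm g.det]
        simp only [Matrix.mul_assoc]

theorem exists_addValuation_coe_eq {v : E → WithTop ℤ}
    (hv_top : ∀ x : E, v x = ⊤ ↔ x = 0)
    (hv_mul : ∀ x y : E, v (x * y) = v x + v y)
    (hv_add : ∀ x y : E, min (v x) (v y) ≤ v (x + y)) :
    ∃ w : AddValuation E (WithTop ℤ), ⇑w = v := by
  have h1 : v 1 = 0 := by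
    obtain ⟨k, hk⟩ := WithTop.ne_top_iff_exists.mp (mt (hv_top 1).mp one_ne_zero)
    have hkk : v 1 = v 1 + v 1 := by rw [← hv_mul, one_mul]
    rw [← hk] at hkk ⊢
    have : k = k + k := mod_cast hkk
    exact congrArg _ (by omega)
  exact ⟨AddValuation.of v ((hv_top 0).mpr rfl) h1 hv_add hv_mul, rfl⟩

theorem one_mem_IEr (w : AddValuation E (WithTop ℤ)) (r : ℤ) : 1 ∈ IEr w r := by
  simp [IEr]

section Valuation

variable (w : AddValuation E (WithTop ℤ))

theorem map_zpow_of_map_eq_one {π : E} (hπ : w π = 1) (k : ℤ) :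
    w (π ^ k) = k := by
  have hnat (k : ℕ) : w (π ^ k) = (k : ℤ) := by
    rw [AddValuation.map_pow, hπ, nsmul_one]; rfl
  cases k with
  | ofNat k => rw [Int.ofNat_eq_natCast, zpow_natCast]; exact hnat k
  | negSucc k =>
    rw [zpow_negSucc, AddValuation.map_inv, hnat, Int.negSucc_eq]
    rfl

variable {w} {g : Matrix (Fin 2) (Fin 2) E}

theorem map_det_of_mem_IwE (hg : g ∈ IwE w) : w g.det = 0 := by
  obtain ⟨h00, h01, h10, h11⟩ := hg
  have hlt : w (g 0 0 * g 1 1) < w (g 0 1 * g 1 0) := by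
    rw [AddValuation.map_mul, AddValuation.map_mul, h00, h11, zero_add]
    exact zero_lt_one.trans_le (le_add_of_nonneg_of_le h01 h10)
  rw [Matrix.det_fin_two, AddValuation.map_sub_eq_of_lt_left _ hlt, AddValuation.map_mul, h00,
    h11, zero_add]

theorem map_mul_add_of_mem_IwE (hg : g ∈ IwE w) {a : E} (ha : 0 < w a) :
    w (g 0 1 * a + g 0 0) = 0 := by
  obtain ⟨h00, h01, -, -⟩ := hg
  have hlt : w (g 0 0) < w (g 0 1 * a) := by
    rw [AddValuation.map_mul, h00]
    exact ha.trans_le (le_add_of_nonneg_left h01)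
  rw [AddValuation.map_add_eq_of_lt_right _ hlt, h00]

end Valuation

theorem statement14_general
    (v : E → WithTop ℤ)
    (hv_top : ∀ x : E, v x = ⊤ ↔ x = 0)
    (hv_mul : ∀ x y : E, v (x * y) = v x + v y)
    (hv_add : ∀ x y : E, min (v x) (v y) ≤ v (x + y))
    (π : E) (hπ : v π = 1)
    (d : ℤ) (hd : 0 < d)
    (n m : ℤ) (hn : 1 ≤ n)
    (g : Matrix (Fin 2) (Fin 2) E) (hg : g ∈ IwE v)
    (a : E) (ha : v a = 1)
    (B : E) (hB : (1 : WithTop ℤ) ≤ v B) (C : E) (D : E) (hD : v D = 0)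
    (x : Matrix (Fin 2) (Fin 2) E) (hx : x = em a * vdot π n d * em B * e0 C D) :
    v (g 0 1 * a + g 0 0) = 0 ∧
    ∃ B' D' : E, (1 : WithTop ℤ) ≤ v B' ∧ v D' = 0 ∧
      ∃ j ∈ IEr v (2 * m + 1),
        g * x = em ((g 1 1 * a + g 1 0) * (g 0 1 * a + g 0 0)⁻¹) * vdot π n d * em B' *
          e0 (g.det * C * (g 0 1 * a + g 0 0)⁻¹) D' * j := by
  obtain ⟨w, rfl⟩ := exists_addValuation_coe_eq hv_top hv_mul hv_add
  have hu := map_mul_add_of_mem_IwE hg (ha ▸ zero_lt_one)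
  have hdet := map_det_of_mem_IwE hg
  have hπ0 : π ≠ 0 := w.ne_top_iff.mp (by simp [hπ])
  set u := g 0 1 * a + g 0 0
  set y := π ^ ((d + 1) / 2 + n / 2)
  set z := π ^ ((d + 1) / 2 + (n + 1) / 2)
  have hvdot : vdot π n d = !![0, z⁻¹; y, 0] := by
    simp only [vdot, _root_.zpow_neg, y, z]
  have hu0 : u ≠ 0 := w.ne_top_iff.mp (ne_of_eq_of_ne hu WithTop.zero_ne_top)
  have hdet0 : g.det ≠ 0 := w.ne_top_iff.mp (ne_of_eq_of_ne hdet WithTop.zero_ne_top)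
  have hyz : (1 : WithTop ℤ) ≤ w y + w z := by
    rw [map_zpow_of_map_eq_one w hπ, map_zpow_of_map_eq_one w hπ]
    exact_mod_cast (by omega : (1 : ℤ) ≤ (d + 1) / 2 + n / 2 + ((d + 1) / 2 + (n + 1) / 2))
  refine ⟨hu, (g 0 1 * y * z + u * B) / (g.det * u⁻¹), u * D, ?_,
    by rw [AddValuation.map_mul, hu, hD, zero_add], 1, one_mem_IEr w _, ?_⟩
  · rw [AddValuation.map_div, AddValuation.map_mul, AddValuation.map_inv, hdet, hu]
    simp only [neg_zero, add_zero, sub_zero]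
    refine w.map_le_add ?_ (by rwa [AddValuation.map_mul, hu, zero_add])
    rw [mul_assoc, AddValuation.map_mul, AddValuation.map_mul]
    exact le_add_of_nonneg_of_le hg.2.1 hyz
  · rw [hx, hvdot, mul_one, mul_em_antidiag_em_e0 g hdet0 a hu0 _ (zpow_ne_zero _ hπ0)]

theorem statement14 [CharP E 2]
    (τ : E →+* E) (hττ : ∀ x : E, τ (τ x) = x) (hτne : τ ≠ RingHom.id E)
    (v : E → WithTop ℤ)
    (hv_top : ∀ x : E, v x = ⊤ ↔ x = 0)
    (hv_mul : ∀ x y : E, v (x * y) = v x + v y)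
    (hv_add : ∀ x y : E, min (v x) (v y) ≤ v (x + y))
    (hv_tau : ∀ x : E, v (τ x) = v x)
    (π : E) (hπ : v π = 1)
    (hv_even : ∀ x : E, τ x = x → ∀ k : ℤ, v x = (k : WithTop ℤ) → Even k)
    (hbasis : ∀ y : E, ∃ c₀ c₁ : E, τ c₀ = c₀ ∧ τ c₁ = c₁ ∧ y = c₀ + c₁ * π)
    (d : ℤ) (hd : 0 < d) (hdodd : Odd d)
    (ε : E) (hε : ε = τ π / π)
    (hεd : v (ε - 1) = (d : WithTop ℤ))
    (n m : ℤ) (hn : 1 ≤ n) (h2n : d < 2 * n) (hm : m = 2 * n + d - 1)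
    (g : Matrix (Fin 2) (Fin 2) E) (hg : g ∈ IwE v) (hgF : g.map ⇑τ = g)
    (a : E) (ha : v a = 1)
    (R : E) (hR : R = π ^ (-(d + 1)) * (τ a + a))
    (B : E) (hB : (1 : WithTop ℤ) ≤ v B) (C : E) (hC : v C = 0) (D : E) (hD : v D = 0)
    (hBR : ((m + 1 : ℤ) : WithTop ℤ) ≤ v (B + π ^ n * R⁻¹))
    (hCD : ((m + 1 : ℤ) : WithTop ℤ) ≤ v (ε ^ ((d + 1) / 2) * R⁻¹ * D⁻¹ * τ C - 1))
    (x : Matrix (Fin 2) (Fin 2) E) (hx : x = em a * vdot π n d * em B * e0 C D) :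
    v (g 0 1 * a + g 0 0) = 0 ∧
    ∃ B' D' : E, (1 : WithTop ℤ) ≤ v B' ∧ v D' = 0 ∧
      ∃ j ∈ IEr v (2 * m + 1),
        g * x = em ((g 1 1 * a + g 1 0) * (g 0 1 * a + g 0 0)⁻¹) * vdot π n d * em B' *
          e0 (g.det * C * (g 0 1 * a + g 0 0)⁻¹) D' * j :=
  statement14_general v hv_top hv_mul hv_add π hπ d hd n m hn g hg a ha B hB C D hD x hx

end ADLV
end
end

section
/- (Character groups of unit filtration quotients.) Let ψ : F → ℂˣ be an additive character (a homomorphism from the additive group of F) which is trivial on p_F and nontrivial on O_F, and let k, r be integers with 0 ≤ k < r ≤ 2k + 1. For a ∈ E with π^{r+d}·a ∈ O_E (i.e. a ∈ p_E^{−(r+d)}), define ψ_{E,a} : U_E^{k+1} → ℂˣ by ψ_{E,a}(x) := ψ(Tr_{E/F}(a·(x − 1))). Then: (1) ψ_{E,a} is a group homomorphism on U_E^{k+1} which is trivial on U_E^{r+1}; (2) ψ_{E,a}(x)·ψ_{E,b}(x) = ψ_{E,a+b}(x) for all x ∈ U_E^{k+1} and a, b ∈ p_E^{−(r+d)}; (3)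 ψ_{E,a} is trivial on all of U_E^{k+1} if and only if a ∈ p_E^{−(k+d)}; (4) every group homomorphism U_E^{k+1} → ℂˣ which is trivial on U_E^{r+1} equals ψ_{E,a} for some a ∈ p_E^{−(r+d)}. Consequently, a ↦ ψ_{E,a} induces a group isomorphism from the additive quotient p_E^{−(r+d)}/p_E^{−(k+d)} onto the group of homomorphisms U_E^{k+1}/U_E^{r+1} → ℂˣ. -/
/-!
Write `z = c₀ + c₁ π` with `c₀, c₁ ∈ F`. Elements of `F` have even valuation, so `v z ≤ v (c₁ π)`,
while `z + τ z = c₁ (π + τ π)` has valuation `v (c₁ π) + d`; hence `v (Tr z) ≥ v z + d`. As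
`v (Tr z)` is even, `ψ ∘ Tr` kills `p_E^{1-d}`, which gives (1), (2) and one half of (3). Conversely `t π / (π + τ π)`
has trace `t` and valuation `v t - d`, so `ψ (Tr (a u))` detects every `a ∉ p_E^{-(k+d)}`.

For (4), since `r ≤ 2k + 1` the map `1 + u ↦ u` identifies `U_E^{k+1} / U_E^{r+1}` with
`p_E^{k+1} / p_E^{r+1}`, and `(b, u) ↦ ψ (Tr (b u))` embeds `p_E^{-(r+d)} / p_E^{-(k+d)}` into
the dual of that group. Both quotients have order `q^{r-k}`, so the embedding is onto.
-/


noncomputable section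

namespace ADLV

variable {E : Type*} [Field E]

/-- The fixed subfield `F` of the automorphism `τ`. -/
def Fsub (τ : E →+* E) : Subfield E where
  carrier := {x | τ x = x}
  mul_mem' := by
    intro a b ha hb
    simp only [Set.mem_setOf_eq, map_mul] at *
    rw [ha, hb]
  one_mem' := by simp only [Set.mem_setOf_eq, map_one]
  add_mem' := by
    intro a b ha hb
    simp only [Set.mem_setOf_eq, map_add] at *
    rw [ha, hb]
  zero_mem' := by simp only [Set.mem_setOf_eq, map_zero]
  neg_mem' := by
    intro a ha
    simp only [Set.mem_setOf_eq, map_neg] at *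
    rw [ha]
  inv_mem' := by
    intro a ha
    simp only [Set.mem_setOf_eq, map_inv₀] at *
    rw [ha]

/-- The trace `Tr_{E/F}(x) = x + τ(x)`, as an element of the fixed field `F`. -/
def TrF (τ : E →+* E) (hττ : ∀ x : E, τ (τ x) = x) (x : E) : Fsub τ :=
  ⟨x + τ x, by
    have h : τ (x + τ x) = x + τ x := by
      rw [map_add, hττ, add_comm]
    exact h⟩

/-- The character `ψ_{E,a}(x) = ψ(Tr_{E/F}(a (x - 1)))`. -/
def psiE (τ : E →+* E) (hττ : ∀ x : E, τ (τ x) = x) (ψ : Fsub τ → ℂˣ) (a x : E) : ℂˣ :=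
  ψ (TrF τ hττ (a * (x - 1)))

/-- The fractional ideal `p_E^k` as an additive subgroup of `E`. -/
def pSub [CharP E 2] (v : E → WithTop ℤ) (hv0 : v 0 = ⊤)
    (hv_add : ∀ x y : E, min (v x) (v y) ≤ v (x + y)) (k : ℤ) : AddSubgroup E where
  carrier := {x | (k : WithTop ℤ) ≤ v x}
  zero_mem' := by simp [Set.mem_setOf_eq, hv0]
  add_mem' := by
    intro a b ha hb
    simp only [Set.mem_setOf_eq] at *
    exact le_trans (le_min ha hb) (hv_add a b)
  neg_mem' := by
    intro a ha
    simpa [Set.mem_setOf_eq, CharTwo.neg_eq] using ha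

lemma card_addMonoidHom_additive_units_complex (G : Type*) [AddCommGroup G] [Finite G] :
    Nat.card (G →+ Additive ℂˣ) = Nat.card G := by
  have : NeZero (Monoid.exponent (Multiplicative G)) := ⟨Monoid.exponent_ne_zero_of_finite⟩
  exact (Nat.card_congr AddMonoidHom.toMultiplicativeLeft).trans
    (CommGroup.card_monoidHom_of_hasEnoughRootsOfUnity (Multiplicative G) ℂ)

theorem exists_eq_pairing_of_card_eq {A G : Type*} [AddCommGroup A] [AddCommGroup G]
    {A' : AddSubgroup A} {G' : AddSubgroup G} [Finite (G ⧸ G')]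
    (hcard : Nat.card (A ⧸ A') = Nat.card (G ⧸ G'))
    (β : A →+ G →+ Additive ℂˣ) (hβG : ∀ a, G' ≤ (β a).ker) (hker : β.ker = A')
    (χ : G →+ Additive ℂˣ) (hχ : G' ≤ χ.ker) : ∃ a, χ = β a := by
  let Φ : A →+ (G ⧸ G' →+ Additive ℂˣ) :=
    AddMonoidHom.mk' (fun a => QuotientAddGroup.lift G' (β a) (hβG a)) fun a b => by
      ext g; simp
  have hΦ (a : A) (g : G) : Φ a g = β a g := rfl
  have hΦker : Φ.ker = A' := by
    rw [← hker]; ext a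
    simp only [AddMonoidHom.mem_ker]
    constructor
    · intro h; ext g; simpa [hΦ] using DFunLike.congr_fun h (g : G ⧸ G')
    · intro h; ext g; simp [hΦ, h]
  have hcardD : Nat.card (G ⧸ G' →+ Additive ℂˣ) = Nat.card (G ⧸ G') :=
    card_addMonoidHom_additive_units_complex _
  have : Finite (G ⧸ G' →+ Additive ℂˣ) :=
    Nat.finite_of_card_ne_zero (by rw [hcardD]; exact Nat.card_pos.ne')
  have hrange : Φ.range = ⊤ := by
    refine AddSubgroup.eq_top_of_card_eq _ ?_
    rw [← Nat.card_congr (QuotientAddGroup.quotientKerEquivRange Φ).toEquiv, hΦker, hcard, hcardD]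
  obtain ⟨a, ha⟩ :=
    AddMonoidHom.mem_range.mp (hrange ▸ AddSubgroup.mem_top (QuotientAddGroup.lift G' χ hχ))
  exact ⟨a, AddMonoidHom.ext fun g => (DFunLike.congr_fun ha (g : G ⧸ G')).symm⟩

lemma mem_pSub [CharP E 2] {v : E → WithTop ℤ} (hv0 : v 0 = ⊤)
    (hv_add : ∀ x y : E, min (v x) (v y) ≤ v (x + y)) {k : ℤ} {x : E} :
    x ∈ pSub v hv0 hv_add k ↔ (k : WithTop ℤ) ≤ v x :=
  Iff.rfl

lemma coe_TrF (τ : E →+* E) (hττ : ∀ x : E, τ (τ x) = x) (x : E) : (TrF τ hττ x : E) = x + τ x :=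
  rfl

lemma TrF_add (τ : E →+* E) (hττ : ∀ x : E, τ (τ x) = x) (x y : E) :
    TrF τ hττ (x + y) = TrF τ hττ x + TrF τ hττ y :=
  Subtype.ext <| by simp only [coe_TrF, map_add, Subfield.coe_add]; ring

lemma psiE_mul_psiE (τ : E →+* E) (hττ : ∀ x : E, τ (τ x) = x) {ψ : Fsub τ → ℂˣ}
    (hψ_hom : ∀ a b : Fsub τ, ψ (a + b) = ψ a * ψ b) (a b x : E) :
    psiE τ hττ ψ a x * psiE τ hττ ψ b x = psiE τ hττ ψ (a + b) x := by
  rw [psiE, psiE, psiE, add_mul, TrF_add, hψ_hom]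

lemma psiE_one_add (τ : E →+* E) (hττ : ∀ x : E, τ (τ x) = x) (ψ : Fsub τ → ℂˣ) (a u : E) :
    psiE τ hττ ψ a (1 + u) = ψ (TrF τ hττ (a * u)) := by
  rw [psiE, add_sub_cancel_left]

section Valuation

variable (v : AddValuation E (WithTop ℤ)) {τ : E →+* E} (hττ : ∀ x : E, τ (τ x) = x)
  {π : E} (hπ : v π = 1)
  (hv_even : ∀ x : E, τ x = x → ∀ k : ℤ, v x = (k : WithTop ℤ) → Even k)
  (hbasis : ∀ y : E, ∃ c₀ c₁ : E, τ c₀ = c₀ ∧ τ c₁ = c₁ ∧ y = c₀ + c₁ * π)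
  {d : ℤ} (hΔ : v (π + τ π) = 1 + d)
  {ψ : Fsub τ → ℂˣ} (hψ_hom : ∀ a b : Fsub τ, ψ (a + b) = ψ a * ψ b)
  (hψ_triv : ∀ x : Fsub τ, ((2 : ℤ) : WithTop ℤ) ≤ v (x : E) → ψ x = 1)
  (hψ_nt : ∃ x : Fsub τ, ((0 : ℤ) : WithTop ℤ) ≤ v (x : E) ∧ ψ x ≠ 1)

include hπ hv_even in
/-- Fixed elements have even valuation, so the two summands have distinct valuations. -/
lemma val_add_mul_le_val_mul {c₀ c₁ : E} (h₀ : τ c₀ = c₀) (h₁ : τ c₁ = c₁) :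
    v (c₀ + c₁ * π) ≤ v (c₁ * π) := by
  by_cases hne : v c₀ = v (c₁ * π)
  · obtain rfl | hc₁ := eq_or_ne c₁ 0
    · simp
    obtain ⟨n, hn⟩ := WithTop.ne_top_iff_exists.mp (v.ne_top_iff.mpr hc₁)
    have hodd : Even (n + 1) := hv_even c₀ h₀ (n + 1) (by rw [hne, v.map_mul, ← hn, hπ]; rfl)
    exact absurd hodd (Int.not_even_iff_odd.mpr (hv_even c₁ h₁ n hn.symm).add_one)
  · rw [v.map_add_of_distinct_val hne]
    exact min_le_right _ _

/-- `(1 + u)(1 + u') = (1 + u + u')(1 + z)` with `v z ≥ 2k + 2 ≥ r + 1`. -/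
lemma map_one_add_add {χ : E → ℂˣ} {k r : ℤ} (hk : 0 ≤ k) (hr : r ≤ 2 * k + 1)
    (hχ_mul : ∀ x y : E, ((k + 1 : ℤ) : WithTop ℤ) ≤ v (x - 1) →
      ((k + 1 : ℤ) : WithTop ℤ) ≤ v (y - 1) → χ (x * y) = χ x * χ y)
    (hχ_triv : ∀ x : E, ((r + 1 : ℤ) : WithTop ℤ) ≤ v (x - 1) → χ x = 1)
    {u u' : E} (hu : ((k + 1 : ℤ) : WithTop ℤ) ≤ v u) (hu' : ((k + 1 : ℤ) : WithTop ℤ) ≤ v u') :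
    χ (1 + (u + u')) = χ (1 + u) * χ (1 + u') := by
  have hsum : ((k + 1 : ℤ) : WithTop ℤ) ≤ v (u + u') := v.map_le_add hu hu'
  have hy : v (1 + (u + u')) = 0 := by
    have hlt : v 1 < v (u + u') :=
      v.map_one ▸ lt_of_lt_of_le (by exact_mod_cast (by omega : (0 : ℤ) < k + 1)) hsum
    rw [v.map_add_eq_of_lt_left hlt, v.map_one]
  have hy0 : 1 + (u + u') ≠ 0 := by
    rintro h
    rw [h, v.map_zero] at hy
    exact WithTop.top_ne_coe hy
  set z := (1 + (u + u'))⁻¹ * (u * u')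
  have hz : ((k + 1 + (k + 1) : ℤ) : WithTop ℤ) ≤ v z := by
    rw [v.map_mul, v.map_mul, v.map_inv, hy, neg_zero, zero_add]
    push_cast at hu hu' ⊢
    gcongr
  have hfactor : (1 + u) * (1 + u') = (1 + (u + u')) * (1 + z) := by
    rw [mul_add (1 + (u + u')), mul_one, mul_inv_cancel_left₀ hy0]
    ring
  rw [← hχ_mul _ _ (by rwa [add_sub_cancel_left]) (by rwa [add_sub_cancel_left]), hfactor,
    hχ_mul _ _ (by rwa [add_sub_cancel_left])
      (by rw [add_sub_cancel_left]; exact le_trans (by exact_mod_cast (by omega)) hz),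
    hχ_triv (1 + z)
      (by rw [add_sub_cancel_left]; exact le_trans (by exact_mod_cast (by omega)) hz),
    mul_one]

include hττ in
lemma TrF_mul_inv_mul (hΔ0 : π + τ π ≠ 0) (t : Fsub τ) :
    TrF τ hττ (t * (π + τ π)⁻¹ * π) = t := by
  have ht : τ t = t := t.2
  ext
  rw [coe_TrF, map_mul, map_mul, map_inv₀, map_add, hττ, ht, add_comm (τ π)]
  field_simp

include hΔ in
lemma add_apply_ne_zero : π + τ π ≠ 0 := by
  rintro h
  rw [h, v.map_zero] at hΔ
  exact WithTop.top_ne_coe (hΔ.trans rfl)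

include hττ hπ hΔ hψ_nt in
lemma exists_psi_TrF_mul_ne_one {k : ℤ} {a : E} (ha : ¬ ((-(k + d) : ℤ) : WithTop ℤ) ≤ v a) :
    ∃ u : E, ((k + 1 : ℤ) : WithTop ℤ) ≤ v u ∧ ψ (TrF τ hττ (a * u)) ≠ 1 := by
  obtain ⟨t, ht, hψt⟩ := hψ_nt
  have ha0 : a ≠ 0 := by rintro rfl; simp at ha
  obtain ⟨n, hn⟩ := WithTop.ne_top_iff_exists.mp (v.ne_top_iff.mpr ha0)
  rw [← hn, WithTop.coe_le_coe, not_le] at ha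
  refine ⟨a⁻¹ * (t * (π + τ π)⁻¹ * π), ?_, ?_⟩
  · rw [v.map_mul, v.map_mul, v.map_mul, v.map_inv, v.map_inv, ← hn, hΔ, hπ]
    calc ((k + 1 : ℤ) : WithTop ℤ) ≤ ((-n + (0 + -(1 + d) + 1) : ℤ) : WithTop ℤ) := by
          exact_mod_cast (by omega)
      _ ≤ _ := by push_cast at ht ⊢; gcongr
  · rwa [mul_inv_cancel_left₀ ha0, TrF_mul_inv_mul hττ (add_apply_ne_zero v hΔ)]

variable [CharP E 2]

include hπ in
lemma val_add_apply_eq {ε : E} (hε : ε = τ π / π) (hεd : v (ε - 1) = d) :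
    v (π + τ π) = 1 + d := by
  have hπ0 : π ≠ 0 := by
    rintro rfl
    rw [v.map_zero] at hπ
    exact WithTop.top_ne_coe hπ
  have hΔ : π + τ π = π * (ε - 1) := by
    rw [hε, mul_sub, mul_div_cancel₀ _ hπ0, mul_one, CharTwo.sub_eq_add, add_comm]
  rw [hΔ, v.map_mul, hπ, hεd]

lemma add_apply_add_mul_eq {c₀ c₁ : E} (h₀ : τ c₀ = c₀) (h₁ : τ c₁ = c₁) :
    c₀ + c₁ * π + τ (c₀ + c₁ * π) = c₁ * (π + τ π) := by
  rw [map_add, map_mul, h₀, h₁]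
  linear_combination c₀ * CharTwo.two_eq_zero (R := E)

include hπ hv_even hbasis hΔ in
lemma le_val_add_apply (z : E) : v z + d ≤ v (z + τ z) := by
  obtain ⟨c₀, c₁, h₀, h₁, rfl⟩ := hbasis z
  rw [add_apply_add_mul_eq h₀ h₁, v.map_mul, hΔ, ← add_assoc, ← hπ, ← v.map_mul]
  gcongr
  exact val_add_mul_le_val_mul v hπ hv_even h₀ h₁

include hπ hv_even hbasis hΔ hψ_triv in
lemma psi_TrF_eq_one {z : E} {m : ℤ} (hz : (m : WithTop ℤ) ≤ v z) (hm : 1 ≤ m + d) :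
    ψ (TrF τ hττ z) = 1 := by
  apply hψ_triv
  rw [coe_TrF]
  have hge : ((1 : ℤ) : WithTop ℤ) ≤ v (z + τ z) :=
    calc ((1 : ℤ) : WithTop ℤ) ≤ ((m + d : ℤ) : WithTop ℤ) := by exact_mod_cast hm
      _ ≤ v z + d := by push_cast; gcongr
      _ ≤ v (z + τ z) := le_val_add_apply v hπ hv_even hbasis hΔ z
  cases h : v (z + τ z) with
  | top => exact le_top
  | coe n =>
    obtain ⟨j, rfl⟩ := hv_even _ (by rw [map_add, hττ, add_comm]) n h
    rw [h] at hge
    have : (1 : ℤ) ≤ j + j := by exact_mod_cast hge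
    exact_mod_cast (by omega : (2 : ℤ) ≤ j + j)

include hττ hπ hv_even hbasis hΔ hψ_triv in
lemma psi_TrF_mul_eq_one {b u : E} {m n : ℤ} (hb : (m : WithTop ℤ) ≤ v b)
    (hu : (n : WithTop ℤ) ≤ v u) (h : 1 ≤ m + n + d) : ψ (TrF τ hττ (b * u)) = 1 :=
  psi_TrF_eq_one v hττ hπ hv_even hbasis hΔ hψ_triv
    (by rw [v.map_mul]; push_cast; exact add_le_add hb hu) h

include hπ hv_even hbasis hΔ hψ_triv hψ_nt in
lemma psi_TrF_mul_eq_one_iff (k : ℤ) (a : E) :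
    (∀ u : E, ((k + 1 : ℤ) : WithTop ℤ) ≤ v u → ψ (TrF τ hττ (a * u)) = 1) ↔
      ((-(k + d) : ℤ) : WithTop ℤ) ≤ v a := by
  refine ⟨fun h => ?_, fun ha u hu => ?_⟩
  · by_contra ha
    obtain ⟨u, hu, hψu⟩ := exists_psi_TrF_mul_ne_one v hττ hπ hΔ hψ_nt ha
    exact hψu (h u hu)
  · exact psi_TrF_mul_eq_one v hττ hπ hv_even hbasis hΔ hψ_triv ha hu (by omega)

include hπ hv_even hbasis hΔ hψ_hom hψ_triv in
lemma psiE_mul {k r : ℤ} (hr : r ≤ 2 * k + 1) {a : E} (ha : ((-(r + d) : ℤ) : WithTop ℤ) ≤ v a)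
    {x y : E} (hx : ((k + 1 : ℤ) : WithTop ℤ) ≤ v (x - 1))
    (hy : ((k + 1 : ℤ) : WithTop ℤ) ≤ v (y - 1)) :
    psiE τ hττ ψ a (x * y) = psiE τ hττ ψ a x * psiE τ hττ ψ a y := by
  have hxy : a * (x * y - 1) = a * (x - 1) + a * (y - 1) + a * (x - 1) * (y - 1) := by ring
  have hquad : ψ (TrF τ hττ (a * (x - 1) * (y - 1))) = 1 :=
    psi_TrF_mul_eq_one v hττ hπ hv_even hbasis hΔ hψ_triv (m := -(r + d) + (k + 1))
      (by rw [v.map_mul]; push_cast at ha hx ⊢; exact add_le_add ha hx) hy (by omega)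
  rw [psiE, psiE, psiE, hxy, TrF_add, TrF_add, hψ_hom, hψ_hom, hquad, mul_one]

include hπ hv_even hbasis hΔ hψ_hom hψ_triv hψ_nt in
lemma exists_psiE_eq {q : ℕ} (hq : q ≠ 0)
    (hcard : ∀ a b : ℤ, a ≤ b →
      Nat.card (pSub v v.map_zero v.map_add a ⧸
          (pSub v v.map_zero v.map_add b).addSubgroupOf (pSub v v.map_zero v.map_add a)) =
        q ^ (b - a).toNat)
    {k r : ℤ} (hk : 0 ≤ k) (hkr : k ≤ r) (hr : r ≤ 2 * k + 1) {χ : E → ℂˣ}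
    (hχ_mul : ∀ x y : E, ((k + 1 : ℤ) : WithTop ℤ) ≤ v (x - 1) →
      ((k + 1 : ℤ) : WithTop ℤ) ≤ v (y - 1) → χ (x * y) = χ x * χ y)
    (hχ_triv : ∀ x : E, ((r + 1 : ℤ) : WithTop ℤ) ≤ v (x - 1) → χ x = 1) :
    ∃ b : E, ((-(r + d) : ℤ) : WithTop ℤ) ≤ v b ∧
      ∀ x : E, ((k + 1 : ℤ) : WithTop ℤ) ≤ v (x - 1) → χ x = psiE τ hττ ψ b x := by
  let P := pSub v v.map_zero v.map_add
  let ψTr : E →+ Additive ℂˣ := AddMonoidHom.mk' (fun z => Additive.ofMul (ψ (TrF τ hττ z)))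
    fun x y => by rw [TrF_add, hψ_hom]; rfl
  let β : P (-(r + d)) →+ P (k + 1) →+ Additive ℂˣ :=
    ((AddMonoidHom.mul.compr₂ ψTr).comp (P _).subtype).compl₂ (P _).subtype
  let χ' : P (k + 1) →+ Additive ℂˣ := AddMonoidHom.mk' (fun u => Additive.ofMul (χ (1 + u)))
    fun u u' => by
      rw [AddSubgroup.coe_add, map_one_add_add v hk hr hχ_mul hχ_triv u.2 u'.2]
      rfl
  have : Finite (P (k + 1) ⧸ (P (r + 1)).addSubgroupOf (P (k + 1))) :=
    Nat.finite_of_card_ne_zero (by rw [hcard _ _ (by omega)]; exact pow_ne_zero _ hq)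
  have hβ : ∀ b, (P (r + 1)).addSubgroupOf (P (k + 1)) ≤ (β b).ker := fun b u hu =>
    psi_TrF_mul_eq_one v hττ hπ hv_even hbasis hΔ hψ_triv b.2 hu (by omega)
  have hker : β.ker = (P (-(k + d))).addSubgroupOf (P (-(r + d))) := by
    ext b
    rw [AddMonoidHom.mem_ker, AddSubgroup.mem_addSubgroupOf, mem_pSub,
      ← psi_TrF_mul_eq_one_iff v hττ hπ hv_even hbasis hΔ hψ_triv hψ_nt k, DFunLike.ext_iff]
    exact ⟨fun h u hu => h ⟨u, hu⟩, fun h u => h u u.2⟩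
  have hχ' : (P (r + 1)).addSubgroupOf (P (k + 1)) ≤ χ'.ker := fun u hu =>
    hχ_triv _ (by rwa [add_sub_cancel_left])
  obtain ⟨⟨b, hb⟩, hχb⟩ := exists_eq_pairing_of_card_eq
    (by rw [hcard _ _ (by omega), hcard _ _ (by omega)]; congr 2; ring) β hβ hker χ' hχ'
  refine ⟨b, hb, fun x hx => ?_⟩
  simpa [χ', β, ψTr, psiE] using DFunLike.congr_fun hχb ⟨x - 1, hx⟩

end Valuation

theorem statement16_general [CharP E 2]
    (τ : E →+* E) (hττ : ∀ x : E, τ (τ x) = x)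
    (v : E → WithTop ℤ)
    (hv_top : ∀ x : E, v x = ⊤ ↔ x = 0)
    (hv_mul : ∀ x y : E, v (x * y) = v x + v y)
    (hv_add : ∀ x y : E, min (v x) (v y) ≤ v (x + y))
    (π : E) (hπ : v π = 1)
    (hv_even : ∀ x : E, τ x = x → ∀ k : ℤ, v x = (k : WithTop ℤ) → Even k)
    (hbasis : ∀ y : E, ∃ c₀ c₁ : E, τ c₀ = c₀ ∧ τ c₁ = c₁ ∧ y = c₀ + c₁ * π)
    (d : ℤ)
    (ε : E) (hε : ε = τ π / π)
    (hεd : v (ε - 1) = (d : WithTop ℤ))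
    (q : ℕ) (hq : 1 < q)
    (hcard : ∀ a b : ℤ, a ≤ b →
      Nat.card (pSub v ((hv_top 0).mpr rfl) hv_add a ⧸
          (pSub v ((hv_top 0).mpr rfl) hv_add b).addSubgroupOf
            (pSub v ((hv_top 0).mpr rfl) hv_add a)) =
        q ^ (b - a).toNat)
    (ψ : Fsub τ → ℂˣ)
    (hψ_hom : ∀ a b : Fsub τ, ψ (a + b) = ψ a * ψ b)
    (hψ_triv : ∀ x : Fsub τ, ((2 : ℤ) : WithTop ℤ) ≤ v (x : E) → ψ x = 1)
    (hψ_nt : ∃ x : Fsub τ, ((0 : ℤ) : WithTop ℤ) ≤ v (x : E) ∧ ψ x ≠ 1)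
    (k r : ℤ) (hk : 0 ≤ k) (hkr : k < r) (hr : r ≤ 2 * k + 1)
    (a : E) (ha : ((-(r + d) : ℤ) : WithTop ℤ) ≤ v a) :
    (∀ x y : E, ((k + 1 : ℤ) : WithTop ℤ) ≤ v (x - 1) → ((k + 1 : ℤ) : WithTop ℤ) ≤ v (y - 1) →
        psiE τ hττ ψ a (x * y) = psiE τ hττ ψ a x * psiE τ hττ ψ a y) ∧
    (∀ x : E, ((r + 1 : ℤ) : WithTop ℤ) ≤ v (x - 1) → psiE τ hττ ψ a x = 1) ∧
    (∀ b x : E, ((-(r + d) : ℤ) : WithTop ℤ) ≤ v b → ((k + 1 : ℤ) : WithTop ℤ) ≤ v (x - 1) →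
        psiE τ hττ ψ a x * psiE τ hττ ψ b x = psiE τ hττ ψ (a + b) x) ∧
    ((∀ x : E, ((k + 1 : ℤ) : WithTop ℤ) ≤ v (x - 1) → psiE τ hττ ψ a x = 1) ↔
      ((-(k + d) : ℤ) : WithTop ℤ) ≤ v a) ∧
    (∀ χ : E → ℂˣ,
      (∀ x y : E, ((k + 1 : ℤ) : WithTop ℤ) ≤ v (x - 1) → ((k + 1 : ℤ) : WithTop ℤ) ≤ v (y - 1) →
        χ (x * y) = χ x * χ y) →
      (∀ x : E, ((r + 1 : ℤ) : WithTop ℤ) ≤ v (x - 1) → χ x = 1) →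
      ∃ b : E, ((-(r + d) : ℤ) : WithTop ℤ) ≤ v b ∧
        ∀ x : E, ((k + 1 : ℤ) : WithTop ℤ) ≤ v (x - 1) → χ x = psiE τ hττ ψ b x) := by
  have hv_one : v 1 = 0 := by
    obtain ⟨n, hn⟩ := WithTop.ne_top_iff_exists.mp (mt (hv_top 1).mp one_ne_zero)
    have h := hv_mul 1 1
    rw [mul_one, ← hn, ← WithTop.coe_add, WithTop.coe_eq_coe] at h
    rw [← hn, show n = 0 by omega]
    rfl
  let w : AddValuation E (WithTop ℤ) := .of v ((hv_top 0).mpr rfl) hv_one hv_add hv_mul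
  have hΔ : w (π + τ π) = 1 + d := val_add_apply_eq w hπ hε hεd
  refine ⟨fun x y hx hy => psiE_mul w hττ hπ hv_even hbasis hΔ hψ_hom hψ_triv hr ha hx hy,
    fun x hx => psi_TrF_mul_eq_one w hττ hπ hv_even hbasis hΔ hψ_triv ha hx (by omega),
    fun b x _ _ => psiE_mul_psiE τ hττ hψ_hom a b x, ?_,
    fun χ hχ_mul hχ_triv => exists_psiE_eq w hττ hπ hv_even hbasis hΔ hψ_hom hψ_triv hψ_nt
      (by omega) hcard hk hkr.le hr hχ_mul hχ_triv⟩
  refine Iff.trans ⟨fun h u hu => ?_, fun h x hx => h (x - 1) hx⟩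
    (psi_TrF_mul_eq_one_iff w hττ hπ hv_even hbasis hΔ hψ_triv hψ_nt k a)
  rw [← psiE_one_add τ hττ ψ a u]
  exact h (1 + u) (by rwa [add_sub_cancel_left])

theorem statement16 [CharP E 2]
    (τ : E →+* E) (hττ : ∀ x : E, τ (τ x) = x) (hτne : τ ≠ RingHom.id E)
    (v : E → WithTop ℤ)
    (hv_top : ∀ x : E, v x = ⊤ ↔ x = 0)
    (hv_mul : ∀ x y : E, v (x * y) = v x + v y)
    (hv_add : ∀ x y : E, min (v x) (v y) ≤ v (x + y))
    (hv_tau : ∀ x : E, v (τ x) = v x)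
    (π : E) (hπ : v π = 1)
    (hv_even : ∀ x : E, τ x = x → ∀ k : ℤ, v x = (k : WithTop ℤ) → Even k)
    (hbasis : ∀ y : E, ∃ c₀ c₁ : E, τ c₀ = c₀ ∧ τ c₁ = c₁ ∧ y = c₀ + c₁ * π)
    (d : ℤ) (hd : 0 < d) (hdodd : Odd d)
    (ε : E) (hε : ε = τ π / π)
    (hεd : v (ε - 1) = (d : WithTop ℤ))
    (q : ℕ) (hq : 1 < q)
    (hcard : ∀ a b : ℤ, a ≤ b →
      Nat.card (pSub v ((hv_top 0).mpr rfl) hv_add a ⧸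
          (pSub v ((hv_top 0).mpr rfl) hv_add b).addSubgroupOf
            (pSub v ((hv_top 0).mpr rfl) hv_add a)) =
        q ^ (b - a).toNat)
    (ψ : Fsub τ → ℂˣ)
    (hψ_hom : ∀ a b : Fsub τ, ψ (a + b) = ψ a * ψ b)
    (hψ_triv : ∀ x : Fsub τ, ((2 : ℤ) : WithTop ℤ) ≤ v (x : E) → ψ x = 1)
    (hψ_nt : ∃ x : Fsub τ, ((0 : ℤ) : WithTop ℤ) ≤ v (x : E) ∧ ψ x ≠ 1)
    (k r : ℤ) (hk : 0 ≤ k) (hkr : k < r) (hr : r ≤ 2 * k + 1)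
    (a : E) (ha : ((-(r + d) : ℤ) : WithTop ℤ) ≤ v a) :
    (∀ x y : E, ((k + 1 : ℤ) : WithTop ℤ) ≤ v (x - 1) → ((k + 1 : ℤ) : WithTop ℤ) ≤ v (y - 1) →
        psiE τ hττ ψ a (x * y) = psiE τ hττ ψ a x * psiE τ hττ ψ a y) ∧
    (∀ x : E, ((r + 1 : ℤ) : WithTop ℤ) ≤ v (x - 1) → psiE τ hττ ψ a x = 1) ∧
    (∀ b x : E, ((-(r + d) : ℤ) : WithTop ℤ) ≤ v b → ((k + 1 : ℤ) : WithTop ℤ) ≤ v (x - 1) →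
        psiE τ hττ ψ a x * psiE τ hττ ψ b x = psiE τ hττ ψ (a + b) x) ∧
    ((∀ x : E, ((k + 1 : ℤ) : WithTop ℤ) ≤ v (x - 1) → psiE τ hττ ψ a x = 1) ↔
      ((-(k + d) : ℤ) : WithTop ℤ) ≤ v a) ∧
    (∀ χ : E → ℂˣ,
      (∀ x y : E, ((k + 1 : ℤ) : WithTop ℤ) ≤ v (x - 1) → ((k + 1 : ℤ) : WithTop ℤ) ≤ v (y - 1) →
        χ (x * y) = χ x * χ y) →
      (∀ x : E, ((r + 1 : ℤ) : WithTop ℤ) ≤ v (x - 1) → χ x = 1) →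
      ∃ b : E, ((-(r + d) : ℤ) : WithTop ℤ) ≤ v b ∧
        ∀ x : E, ((k + 1 : ℤ) : WithTop ℤ) ≤ v (x - 1) → χ x = psiE τ hττ ψ b x) :=
  statement16_general τ hττ v hv_top hv_mul hv_add π hπ hv_even hbasis d ε hε hεd q hq hcard ψ
    hψ_hom hψ_triv hψ_nt k r hk hkr hr a ha

end ADLV
end
end
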